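/- arXiv:2311.06013 — 2 statements merged into one kernel-verified Lean document; each statement's English description precedes it below -/
import Mathlib

section
/- Let n ∈ ℕ and let a, b be indices with 0 ≤ a < b ≤ 4^n. If the level of the pair (a, b) in K_n equals i, then dist (K_n a) (K_n b) ≥ (Real.sqrt 3 / 2) · 3^{−i}. -/
/-- The point of the Euclidean plane with the given coordinates. -/
noncomputable def pt (x y : ℝ) : EuclideanSpace ℝ (Fin 2) :=
  (WithLp.equiv 2 (Fin 2 → ℝ)).symm ![x, y]

/-- Rotation by 90 degrees counterclockwise: `ρ(x, y) = (−y, x)`. -/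
noncomputable def rot90 (x : EuclideanSpace ℝ (Fin 2)) : EuclideanSpace ℝ (Fin 2) :=
  pt (-x 1) (x 0)

/-- The vertices of the Koch polyline: `koch n k` is the `k`-th vertex (for `0 ≤ k ≤ 4^n`)
of the `n`-th stage `K_n` of the Koch curve construction, starting from the unit segment
from `(0,0)` to `(1,0)`.  Each edge `ab` of `K_n` is replaced in `K_{n+1}` by the four edges
through `a`, `a + (b−a)/3`, `(a+b)/2 + (√3/6)·ρ(b−a)`, `a + 2(b−a)/3`, `b`. -/
noncomputable def koch : ℕ → ℕ → EuclideanSpace ℝ (Fin 2)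
  | 0, k => if k = 0 then pt 0 0 else pt 1 0
  | n + 1, j =>
      let a := koch n (j / 4)
      let b := koch n (j / 4 + 1)
      if j % 4 = 0 then a
      else if j % 4 = 1 then a + (3 : ℝ)⁻¹ • (b - a)
      else if j % 4 = 2 then (2 : ℝ)⁻¹ • (a + b) + (Real.sqrt 3 / 6) • rot90 (b - a)
      else a + (2 / 3 : ℝ) • (b - a)

/-- The level of the index `k` (with `0 ≤ k ≤ 4^n`) in `K_n`: the least `i ≤ n` such that
`4^(n−i)` divides `k`, i.e. such that `koch n k` is already a vertex of `K_i`. -/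
noncomputable def kochLevel (n k : ℕ) : ℕ := sInf {i | i ≤ n ∧ 4 ^ (n - i) ∣ k}

/-- The level of the pair of indices `(a, b)`: the least `i` such that at least two indices
`k` with `a ≤ k ≤ b` have level at most `i`. -/
noncomputable def kochPairLevel (n a b : ℕ) : ℕ :=
  sInf {i | ∃ k₁ k₂ : ℕ, a ≤ k₁ ∧ k₁ < k₂ ∧ k₂ ≤ b ∧ kochLevel n k₁ ≤ i ∧ kochLevel n k₂ ≤ i}
namespace KochAux

abbrev E2 := EuclideanSpace ℝ (Fin 2)

@[simp] lemma pt_c0 (x y : ℝ) : pt x y 0 = x := rfl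
@[simp] lemma pt_c1 (x y : ℝ) : pt x y 1 = y := rfl
@[simp] lemma add_c (a b : E2) (i : Fin 2) : (a + b) i = a i + b i := rfl
@[simp] lemma sub_c (a b : E2) (i : Fin 2) : (a - b) i = a i - b i := rfl
@[simp] lemma smul_c (r : ℝ) (a : E2) (i : Fin 2) : (r • a) i = r * a i := rfl
@[simp] lemma rot_c0 (x : E2) : rot90 x 0 = -(x 1) := rfl
@[simp] lemma rot_c1 (x : E2) : rot90 x 1 = x 0 := rfl

lemma ext2 {a b : E2} (h0 : a 0 = b 0) (h1 : a 1 = b 1) : a = b := by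
  ext i; fin_cases i <;> assumption

/-- `cmul d e`: complex multiplication of plane points. -/
noncomputable def cmul (d e : E2) : E2 := e 0 • d + e 1 • rot90 d

/-- `sim P d`: the direct similarity sending `(0,0) ↦ P`, `(1,0) ↦ P + d`. -/
noncomputable def sim (P d z : E2) : E2 := P + cmul d z

@[simp] lemma cmul_c0 (d e : E2) : cmul d e 0 = e 0 * d 0 - e 1 * d 1 := by
  simp [cmul]; ring
@[simp] lemma cmul_c1 (d e : E2) : cmul d e 1 = e 0 * d 1 + e 1 * d 0 := by
  simp [cmul]
@[simp] lemma sim_c0 (P d z : E2) : sim P d z 0 = P 0 + (z 0 * d 0 - z 1 * d 1) := by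
  simp [sim]
@[simp] lemma sim_c1 (P d z : E2) : sim P d z 1 = P 1 + (z 0 * d 1 + z 1 * d 0) := by
  simp [sim]

lemma sim_comp (P d Q e z : E2) : sim P d (sim Q e z) = sim (sim P d Q) (cmul d e) z := by
  apply ext2 <;> simp <;> ring

lemma cmul_cmul (d e g : E2) : cmul (cmul d e) g = cmul d (cmul e g) := by
  apply ext2 <;> simp <;> ring

lemma cmul_comm (d e : E2) : cmul d e = cmul e d := by
  apply ext2 <;> simp <;> ring

lemma sim_seg (P d a b : E2) (c : ℝ) :
    sim P d a + c • (sim P d b - sim P d a) = sim P d (a + c • (b - a)) := by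
  apply ext2 <;> simp <;> ring

lemma sim_mid (P d a b : E2) (c : ℝ) :
    (2 : ℝ)⁻¹ • (sim P d a + sim P d b) + c • rot90 (sim P d b - sim P d a) =
      sim P d ((2 : ℝ)⁻¹ • (a + b) + c • rot90 (b - a)) := by
  apply ext2 <;> simp <;> ring

lemma sim_vzero (P d : E2) : sim P d (pt 0 0) = P := by
  apply ext2 <;> simp

lemma sim_vone (P d : E2) : sim P d (pt 1 0) = P + d := by
  apply ext2 <;> simp

lemma koch_zero_zero : koch 0 0 = pt 0 0 := by rw [koch]; simp
lemma koch_zero_one : koch 0 1 = pt 1 0 := by rw [koch]; simp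

lemma koch_sim : ∀ (m i k t : ℕ), t ≤ 4 ^ m →
    koch (i + m) (k * 4 ^ m + t) =
      sim (koch i k) (koch i (k + 1) - koch i k) (koch m t) := by
  intro m
  induction m with
  | zero =>
    intro i k t ht
    interval_cases t
    · simp [koch_zero_zero, sim_vzero]
    · simp only [pow_zero, mul_one, koch_zero_one, sim_vone]
      apply ext2 <;> simp
  | succ m IH =>
    intro i k t ht
    have h4 : (4:ℕ) ^ (m + 1) = 4 * 4 ^ m := by rw [pow_succ]; ring
    set K := k * 4 ^ m with hK
    have hkt : k * 4 ^ (m + 1) + t = 4 * K + t := by rw [h4, hK]; ring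
    have him : i + (m + 1) = (i + m) + 1 := rfl
    rw [him, hkt, koch]
    have hdiv : (4 * K + t) / 4 = K + t / 4 := by omega
    have hmod : (4 * K + t) % 4 = t % 4 := by omega
    simp only [hdiv, hmod]
    set P := koch i k
    set d := koch i (k + 1) - koch i k
    have hre : t % 4 = 0 ∨ t % 4 = 1 ∨ t % 4 = 2 ∨ t % 4 = 3 := by omega
    have h4m : 0 < (4:ℕ) ^ m := by positivity
    rcases hre with hr | hr | hr | hr
    · rw [if_pos hr]
      have ht4 : t / 4 ≤ 4 ^ m := by omega
      rw [IH i k (t / 4) ht4]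
      congr 1
      rw [koch, if_pos hr]
    · rw [if_neg (by omega), if_pos hr]
      have ht4 : t / 4 ≤ 4 ^ m := by omega
      have ht4' : t / 4 + 1 ≤ 4 ^ m := by omega
      rw [IH i k (t / 4) ht4, show K + t / 4 + 1 = K + (t / 4 + 1) by ring,
        IH i k (t / 4 + 1) ht4', sim_seg]
      congr 1
      rw [koch, if_neg (by omega), if_pos hr]
    · rw [if_neg (by omega), if_neg (by omega), if_pos hr]
      have ht4 : t / 4 ≤ 4 ^ m := by omega
      have ht4' : t / 4 + 1 ≤ 4 ^ m := by omega
      rw [IH i k (t / 4) ht4, show K + t / 4 + 1 = K + (t / 4 + 1) by ring,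
        IH i k (t / 4 + 1) ht4', sim_mid]
      congr 1
      rw [koch, if_neg (by omega), if_neg (by omega), if_pos hr]
    · rw [if_neg (by omega), if_neg (by omega), if_neg (by omega)]
      have ht4 : t / 4 ≤ 4 ^ m := by omega
      have ht4' : t / 4 + 1 ≤ 4 ^ m := by omega
      rw [IH i k (t / 4) ht4, show K + t / 4 + 1 = K + (t / 4 + 1) by ring,
        IH i k (t / 4 + 1) ht4', sim_seg]
      congr 1
      rw [koch, if_neg (by omega), if_neg (by omega), if_neg (by omega)]

end KochAux

namespace KochAux

lemma sq3 : Real.sqrt 3 ^ 2 = 3 := Real.sq_sqrt (by norm_num)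
lemma s3nn : (0:ℝ) ≤ Real.sqrt 3 := Real.sqrt_nonneg 3

lemma koch_succ (n j : ℕ) : koch (n+1) j =
      let a := koch n (j / 4)
      let b := koch n (j / 4 + 1)
      if j % 4 = 0 then a
      else if j % 4 = 1 then a + (3 : ℝ)⁻¹ • (b - a)
      else if j % 4 = 2 then (2 : ℝ)⁻¹ • (a + b) + (Real.sqrt 3 / 6) • rot90 (b - a)
      else a + (2 / 3 : ℝ) • (b - a) := by
  rw [koch]

lemma koch_1_0 : koch 1 0 = pt 0 0 := by
  have h := koch_succ 0 0; norm_num [koch_zero_zero] at h; exact h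
lemma koch_1_1 : koch 1 1 = pt (1/3) 0 := by
  have h := koch_succ 0 1; norm_num [koch_zero_zero, koch_zero_one] at h
  rw [h]; apply ext2 <;> simp <;> ring
lemma koch_1_2 : koch 1 2 = pt (1/2) (Real.sqrt 3/6) := by
  have h := koch_succ 0 2; norm_num [koch_zero_zero, koch_zero_one] at h
  rw [h]; apply ext2 <;> simp <;> ring
lemma koch_1_3 : koch 1 3 = pt (2/3) 0 := by
  have h := koch_succ 0 3; norm_num [koch_zero_zero, koch_zero_one] at h
  rw [h]; apply ext2 <;> simp <;> ring
lemma koch_1_4 : koch 1 4 = pt 1 0 := by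
  have h := koch_succ 0 4; norm_num [koch_zero_one] at h; exact h

/-- The closed triangle with vertices `(0,0)`, `(1,0)`, `(1/2, sqrt 3/6)`. -/
def inT (z : E2) : Prop :=
  0 ≤ z 1 ∧ Real.sqrt 3 * z 1 ≤ z 0 ∧ Real.sqrt 3 * z 1 ≤ 1 - z 0

lemma inT_zero : inT (pt 0 0) := by refine ⟨le_refl _, ?_, ?_⟩ <;> simp
lemma inT_one : inT (pt 1 0) := by refine ⟨le_refl _, ?_, ?_⟩ <;> simp

lemma gen_maps_T (k : ℕ) (hk : k ≤ 3) (z : E2) (hz : inT z) :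
    inT (sim (koch 1 k) (koch 1 (k+1) - koch 1 k) z) := by
  obtain ⟨h1, h2, h3⟩ := hz
  have hz0 : 0 ≤ z 0 := le_trans (mul_nonneg s3nn h1) h2
  have hz0' : z 0 ≤ 1 := by nlinarith [mul_nonneg s3nn h1]
  have hs2 := sq3
  have hsn := s3nn
  interval_cases k <;>
    refine ⟨?_, ?_, ?_⟩ <;>
    simp [koch_1_0, koch_1_1, koch_1_2, koch_1_3, koch_1_4] <;>
    nlinarith [mul_nonneg hsn h1, mul_nonneg hsn hz0,
      mul_nonneg hsn (sub_nonneg.2 h2), mul_nonneg hsn (sub_nonneg.2 h3)]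

lemma koch_mem_T : ∀ (m t : ℕ), t ≤ 4 ^ m → inT (koch m t) := by
  intro m
  induction m with
  | zero =>
    intro t ht
    interval_cases t
    · rw [koch_zero_zero]; exact inT_zero
    · rw [koch_zero_one]; exact inT_one
  | succ m IH =>
    intro t ht
    have h4 : (4:ℕ) ^ (m + 1) = 4 * 4 ^ m := by rw [pow_succ]; ring
    have h4m : 0 < (4:ℕ) ^ m := by positivity
    obtain ⟨k, s, hk3, hs4, hts⟩ : ∃ k s, k ≤ 3 ∧ s ≤ 4 ^ m ∧ t = k * 4 ^ m + s := by
      by_cases h : t = 4 ^ (m + 1)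
      · exact ⟨3, 4 ^ m, by norm_num, le_refl _, by omega⟩
      · refine ⟨t / 4 ^ m, t % 4 ^ m, ?_, ?_, ?_⟩
        · have h1 : t < 4 * 4 ^ m := by omega
          have := (Nat.div_lt_iff_lt_mul h4m).mpr (by omega : t < 4 * 4 ^ m)
          omega
        · exact le_of_lt (Nat.mod_lt _ h4m)
        · rw [Nat.mul_comm]; exact (Nat.div_add_mod t (4 ^ m)).symm
    have hsim := koch_sim m 1 k s hs4
    rw [Nat.add_comm 1 m] at hsim
    rw [hts, hsim]
    exact gen_maps_T k hk3 _ (IH s hs4)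

end KochAux

namespace KochAux

lemma s3_gt : (17/10:ℝ) < Real.sqrt 3 := by nlinarith [sq3, s3nn]
lemma s3_lt : Real.sqrt 3 < 9/5 := by nlinarith [sq3, s3nn]

lemma dist_coord (x y : E2) : dist x y = Real.sqrt ((x 0 - y 0)^2 + (x 1 - y 1)^2) := by
  rw [EuclideanSpace.dist_eq]
  congr 1
  simp [Fin.sum_univ_two, Real.dist_eq, sq_abs]

lemma dist_ge_of_sep (x y : E2) (u0 u1 c : ℝ) (hu : u0^2 + u1^2 = 1)
    (h : c ≤ u0 * (y 0 - x 0) + u1 * (y 1 - x 1)) : c ≤ dist x y := by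
  rw [dist_coord]
  have key : (u0 * (y 0 - x 0) + u1 * (y 1 - x 1))^2 ≤ (x 0 - y 0)^2 + (x 1 - y 1)^2 := by
    nlinarith [sq_nonneg (u0 * (y 1 - x 1) - u1 * (y 0 - x 0)), hu,
      sq_nonneg (y 0 - x 0), sq_nonneg (y 1 - x 1)]
  calc c ≤ u0 * (y 0 - x 0) + u1 * (y 1 - x 1) := h
    _ ≤ Real.sqrt ((u0 * (y 0 - x 0) + u1 * (y 1 - x 1))^2) := by
        rw [Real.sqrt_sq_eq_abs]; exact le_abs_self _
    _ ≤ _ := Real.sqrt_le_sqrt key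

lemma sim_dist (P d z w : E2) :
    dist (sim P d z) (sim P d w) = Real.sqrt (d 0^2 + d 1^2) * dist z w := by
  rw [dist_coord, dist_coord, ← Real.sqrt_mul (by positivity)]
  congr 1
  simp only [sim_c0, sim_c1]
  ring

lemma sqrt_19 : Real.sqrt (1/9 : ℝ) = 1/3 := by
  rw [show (1/9:ℝ) = (1/3)^2 by norm_num, Real.sqrt_sq (by norm_num)]

lemma sqrt_9 : Real.sqrt 9 = 3 := by
  rw [show (9:ℝ) = 3^2 by norm_num, Real.sqrt_sq (by norm_num)]

lemma koch_edge_dist : ∀ i k, k + 1 ≤ 4 ^ i → dist (koch i k) (koch i (k+1)) = (1/3:ℝ)^i := by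
  intro i
  induction i with
  | zero =>
    intro k hk
    have : k = 0 := by omega
    subst this
    rw [koch_zero_zero, koch_zero_one, dist_coord]
    norm_num
  | succ i IH =>
    intro k hk
    have h4 : (4:ℕ) ^ (i + 1) = 4 * 4 ^ i := by rw [pow_succ]; ring
    set K := k / 4 with hK
    set r := k % 4 with hr
    have hr3 : r ≤ 3 := by omega
    have hKi : K + 1 ≤ 4 ^ i := by omega
    have e1 : k = K * 4 ^ 1 + r := by norm_num; omega
    have e2 : k + 1 = K * 4 ^ 1 + (r + 1) := by rw [e1]; ring
    rw [e2, e1, koch_sim 1 i K r (by omega), koch_sim 1 i K (r+1) (by omega), sim_dist]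
    have hd : Real.sqrt ((koch i (K+1) - koch i K) 0 ^ 2 + (koch i (K+1) - koch i K) 1 ^ 2)
        = (1/3:ℝ)^i := by
      rw [← IH K hKi, dist_coord]
      congr 1
      simp only [sub_c]
      ring
    rw [hd]
    have hgen : dist (koch 1 r) (koch 1 (r+1)) = 1/3 := by
      interval_cases r
      · rw [koch_1_0, show (0:ℕ)+1 = 1 from rfl, koch_1_1, dist_coord]
        norm_num [sqrt_19, sqrt_9]
      · rw [koch_1_1, show (1:ℕ)+1 = 2 from rfl, koch_1_2, dist_coord]
        rw [show ((pt (1/3) 0) 0 - (pt (1/2) (Real.sqrt 3/6)) 0)^2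
            + ((pt (1/3) 0) 1 - (pt (1/2) (Real.sqrt 3/6)) 1)^2 = (1/9:ℝ) by
          simp only [pt_c0, pt_c1]; linear_combination (1/36) * sq3]
        exact sqrt_19
      · rw [koch_1_2, show (2:ℕ)+1 = 3 from rfl, koch_1_3, dist_coord]
        rw [show ((pt (1/2) (Real.sqrt 3/6)) 0 - (pt (2/3) 0) 0)^2
            + ((pt (1/2) (Real.sqrt 3/6)) 1 - (pt (2/3) 0) 1)^2 = (1/9:ℝ) by
          simp only [pt_c0, pt_c1]; linear_combination (1/36) * sq3]
        exact sqrt_19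
      · rw [koch_1_3, show (3:ℕ)+1 = 4 from rfl, koch_1_4, dist_coord]
        norm_num [sqrt_19, sqrt_9]
    rw [hgen, pow_succ]

lemma edge_norm (i k : ℕ) (hk : k + 1 ≤ 4 ^ i) :
    Real.sqrt ((koch i (k+1) - koch i k) 0 ^ 2 + (koch i (k+1) - koch i k) 1 ^ 2)
      = (1/3:ℝ)^i := by
  rw [← koch_edge_dist i k hk, dist_coord]
  congr 1
  simp only [sub_c]
  ring

lemma cmul_sub (d a b : E2) : cmul d (a - b) = cmul d a - cmul d b := by
  apply ext2 <;> simp <;> ring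

lemma sim_sub (P d z w : E2) : sim P d z - sim P d w = cmul d (z - w) := by
  apply ext2 <;> simp <;> ring

lemma cmul_right_swap (d e g : E2) : cmul (cmul d e) g = cmul (cmul d g) e := by
  apply ext2 <;> simp <;> ring

noncomputable def w60 : E2 := pt (1/2) (Real.sqrt 3/2)
noncomputable def wm120 : E2 := pt (-(1/2)) (-(Real.sqrt 3/2))
@[simp] lemma w60_c0 : w60 0 = 1/2 := rfl
@[simp] lemma w60_c1 : w60 1 = Real.sqrt 3/2 := rfl
@[simp] lemma wm120_c0 : wm120 0 = -(1/2) := rfl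
@[simp] lemma wm120_c1 : wm120 1 = -(Real.sqrt 3/2) := rfl

lemma koch_turn : ∀ i u, 1 ≤ u → u + 1 ≤ 4 ^ i →
    koch i (u+1) - koch i u = cmul (koch i u - koch i (u-1)) w60 ∨
    koch i (u+1) - koch i u = cmul (koch i u - koch i (u-1)) wm120 := by
  intro i
  induction i with
  | zero => intro u h1 h2; simp at h2; omega
  | succ i IH =>
    intro u hu1 hu2
    have h4 : (4:ℕ) ^ (i + 1) = 4 * 4 ^ i := by rw [pow_succ]; ring
    have hvec : ∀ V t t', t' = t + 1 → t ≤ 3 → V + 1 ≤ 4 ^ i →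
        koch (i+1) (V*4 + t') - koch (i+1) (V*4 + t)
          = cmul (koch i (V+1) - koch i V) (koch 1 t' - koch 1 t) := by
      intro V t t' ht' ht hV
      have e1 : V * 4 + t = V * 4 ^ 1 + t := by norm_num
      have e2 : V * 4 + t' = V * 4 ^ 1 + t' := by norm_num
      rw [e1, e2, koch_sim 1 i V t (by omega), koch_sim 1 i V t' (by omega), sim_sub]
    set U := u / 4 with hU
    have hUb : U + 1 ≤ 4 ^ i := by omega
    have hmod4 : u % 4 = 0 ∨ u % 4 = 1 ∨ u % 4 = 2 ∨ u % 4 = 3 := by omega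
    rcases hmod4 with hr | hr | hr | hr
    · -- u ≡ 0: inherited turn
      have hU1 : 1 ≤ U := by omega
      have hnext : koch (i+1) (u+1) - koch (i+1) u
          = cmul (koch i (U+1) - koch i U) (pt (1/3) 0) := by
        have h := hvec U 0 1 rfl (by omega) hUb
        rw [show U*4 + 1 = u + 1 by omega, show U*4 + 0 = u by omega] at h
        rw [h, koch_1_0, koch_1_1,
          show pt (1/3) 0 - pt 0 0 = pt (1/3) 0 by apply ext2 <;> simp]
      have hprev : koch (i+1) u - koch (i+1) (u-1)
          = cmul (koch i U - koch i (U-1)) (pt (1/3) 0) := by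
        have h := hvec (U-1) 3 4 rfl (by omega) (by omega)
        rw [show (U-1)*4 + 4 = u by omega, show (U-1)*4 + 3 = u - 1 by omega,
            show U - 1 + 1 = U by omega, koch_1_3, koch_1_4] at h
        rw [h, show pt 1 0 - pt (2/3) 0 = pt (1/3) 0 by
          apply ext2 <;> simp <;> norm_num]
      rcases IH U hU1 hUb with h | h
      · left; rw [hnext, h, cmul_right_swap, hprev]
      · right; rw [hnext, h, cmul_right_swap, hprev]
    · -- u ≡ 1 : left turn
      left
      have hnext := hvec U 1 2 rfl (by omega) hUb
      have hprev := hvec U 0 1 rfl (by omega) hUb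
      rw [show u + 1 = U*4 + 2 by omega, show u = U*4 + 1 by omega,
          show U*4 + 1 - 1 = U*4 + 0 by omega, hnext, hprev, cmul_cmul,
          show cmul (koch 1 1 - koch 1 0) w60 = koch 1 2 - koch 1 1 by
            rw [koch_1_0, koch_1_1, koch_1_2]
            refine ext2 (by simp only [sub_c, pt_c0, pt_c1, cmul_c0, cmul_c1, w60_c0, w60_c1, wm120_c0, wm120_c1]; linear_combination (0:ℝ) * sq3)
              (by simp only [sub_c, pt_c0, pt_c1, cmul_c0, cmul_c1, w60_c0, w60_c1, wm120_c0, wm120_c1]; linear_combination (0:ℝ) * sq3)]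
    · -- u ≡ 2 : right turn
      right
      have hnext := hvec U 2 3 rfl (by omega) hUb
      have hprev := hvec U 1 2 rfl (by omega) hUb
      rw [show u + 1 = U*4 + 3 by omega, show u = U*4 + 2 by omega,
          show U*4 + 2 - 1 = U*4 + 1 by omega, hnext, hprev, cmul_cmul,
          show cmul (koch 1 2 - koch 1 1) wm120 = koch 1 3 - koch 1 2 by
            rw [koch_1_1, koch_1_2, koch_1_3]
            refine ext2 (by simp only [sub_c, pt_c0, pt_c1, cmul_c0, cmul_c1, w60_c0, w60_c1, wm120_c0, wm120_c1]; linear_combination (1/12:ℝ) * sq3)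
              (by simp only [sub_c, pt_c0, pt_c1, cmul_c0, cmul_c1, w60_c0, w60_c1, wm120_c0, wm120_c1]; linear_combination (0:ℝ) * sq3)]
    · -- u ≡ 3 : left turn
      left
      have hnext := hvec U 3 4 rfl (by omega) hUb
      have hprev := hvec U 2 3 rfl (by omega) hUb
      rw [show u + 1 = U*4 + 4 by omega, show u = U*4 + 3 by omega,
          show U*4 + 3 - 1 = U*4 + 2 by omega, hnext, hprev, cmul_cmul,
          show cmul (koch 1 3 - koch 1 2) w60 = koch 1 4 - koch 1 3 by
            rw [koch_1_2, koch_1_3, koch_1_4]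
            refine ext2 (by simp only [sub_c, pt_c0, pt_c1, cmul_c0, cmul_c1, w60_c0, w60_c1, wm120_c0, wm120_c1]; linear_combination (1/12:ℝ) * sq3)
              (by simp only [sub_c, pt_c0, pt_c1, cmul_c0, cmul_c1, w60_c0, w60_c1, wm120_c0, wm120_c1]; linear_combination (0:ℝ) * sq3)]

end KochAux

namespace KochAux

lemma tri_bound (z0 z1 α β γ M : ℝ) (h1 : 0 ≤ z1) (h2 : Real.sqrt 3 * z1 ≤ z0)
    (h3 : Real.sqrt 3 * z1 ≤ 1 - z0) (hg : 2 * γ * (Real.sqrt 3 * z1) = β * z1)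
    (hv1 : 0 ≤ M) (hv2 : α ≤ M) (hv3 : α/2 + γ ≤ M) :
    α * z0 + β * z1 ≤ M := by
  have hsz : 0 ≤ Real.sqrt 3 * z1 := mul_nonneg s3nn h1
  linarith [mul_nonneg (sub_nonneg.2 hv2) (sub_nonneg.2 h2),
             mul_nonneg hv1 (sub_nonneg.2 h3),
             mul_nonneg (sub_nonneg.2 hv3) hsz, hg]

lemma cfgA_0_2 (z w : E2) (hz : inT z) (hw : inT w) :
    Real.sqrt 3/6 ≤ dist (sim (koch 1 0) (koch 1 1 - koch 1 0) z) (sim (koch 1 2) (koch 1 3 - koch 1 2) w) := by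
  obtain ⟨hz1, hz2, hz3⟩ := hz
  obtain ⟨hw1, hw2, hw3⟩ := hw
  have hx : ((0) + (1/6) * Real.sqrt 3) * z 0 + ((1/6) + (0) * Real.sqrt 3) * z 1 ≤ ((0) + (1/6) * Real.sqrt 3) :=
    tri_bound (z 0) (z 1) _ _ ((0) + (1/36) * Real.sqrt 3) _ hz1 hz2 hz3
      (by linear_combination ((1/18) * z 1) * sq3)
      (by linarith [s3_gt, s3_lt]) (by linarith [s3_gt, s3_lt])
      (by linarith [s3_gt, s3_lt])
  have hy : ((0) + (0) * Real.sqrt 3) * w 0 + ((-1/3) + (0) * Real.sqrt 3) * w 1 ≤ ((0) + (0) * Real.sqrt 3) :=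
    tri_bound (w 0) (w 1) _ _ ((0) + (-1/18) * Real.sqrt 3) _ hw1 hw2 hw3
      (by linear_combination ((-1/9) * w 1) * sq3)
      (by linarith [s3_gt, s3_lt]) (by linarith [s3_gt, s3_lt])
      (by linarith [s3_gt, s3_lt])
  refine dist_ge_of_sep _ _ ((0) + (1/2) * Real.sqrt 3) ((1/2) + (0) * Real.sqrt 3) _
    (by linear_combination ((1/4):ℝ) * sq3) ?_
  have hs3 : Real.sqrt 3 ^ 3 = 3 * Real.sqrt 3 := by
    rw [show (3:ℕ) = 2 + 1 from rfl, pow_succ, sq3]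
  have b2z0 : Real.sqrt 3 ^ 2 * z 0 = 3 * z 0 := by rw [sq3]
  have b3z0 : Real.sqrt 3 ^ 3 * z 0 = 3 * Real.sqrt 3 * z 0 := by rw [hs3]
  have b2z1 : Real.sqrt 3 ^ 2 * z 1 = 3 * z 1 := by rw [sq3]
  have b3z1 : Real.sqrt 3 ^ 3 * z 1 = 3 * Real.sqrt 3 * z 1 := by rw [hs3]
  have b2w0 : Real.sqrt 3 ^ 2 * w 0 = 3 * w 0 := by rw [sq3]
  have b3w0 : Real.sqrt 3 ^ 3 * w 0 = 3 * Real.sqrt 3 * w 0 := by rw [hs3]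
  have b2w1 : Real.sqrt 3 ^ 2 * w 1 = 3 * w 1 := by rw [sq3]
  have b3w1 : Real.sqrt 3 ^ 3 * w 1 = 3 * Real.sqrt 3 * w 1 := by rw [hs3]
  simp only [koch_1_0, koch_1_1, koch_1_2, koch_1_3, koch_1_4, sim_c0, sim_c1, sub_c, add_c, smul_c,
    pt_c0, pt_c1, w60_c0, w60_c1, wm120_c0, wm120_c1]
  linarith [hx, hy, sq3, hs3, b2z0, b3z0, b2z1, b3z1, b2w0, b3w0, b2w1, b3w1, s3_gt, s3_lt, s3nn]

lemma cfgA_0_3 (z w : E2) (hz : inT z) (hw : inT w) :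
    Real.sqrt 3/6 ≤ dist (sim (koch 1 0) (koch 1 1 - koch 1 0) z) (sim (koch 1 3) (koch 1 4 - koch 1 3) w) := by
  obtain ⟨hz1, hz2, hz3⟩ := hz
  obtain ⟨hw1, hw2, hw3⟩ := hw
  have hx : ((1/3) + (0) * Real.sqrt 3) * z 0 + ((0) + (0) * Real.sqrt 3) * z 1 ≤ ((1/3) + (0) * Real.sqrt 3) :=
    tri_bound (z 0) (z 1) _ _ ((0) + (0) * Real.sqrt 3) _ hz1 hz2 hz3
      (by linear_combination ((0) * z 1) * sq3)
      (by linarith [s3_gt, s3_lt]) (by linarith [s3_gt, s3_lt])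
      (by linarith [s3_gt, s3_lt])
  have hy : ((-1/3) + (0) * Real.sqrt 3) * w 0 + ((0) + (0) * Real.sqrt 3) * w 1 ≤ ((0) + (0) * Real.sqrt 3) :=
    tri_bound (w 0) (w 1) _ _ ((0) + (0) * Real.sqrt 3) _ hw1 hw2 hw3
      (by linear_combination ((0) * w 1) * sq3)
      (by linarith [s3_gt, s3_lt]) (by linarith [s3_gt, s3_lt])
      (by linarith [s3_gt, s3_lt])
  refine dist_ge_of_sep _ _ ((1) + (0) * Real.sqrt 3) ((0) + (0) * Real.sqrt 3) _
    (by linear_combination ((0):ℝ) * sq3) ?_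
  have hs3 : Real.sqrt 3 ^ 3 = 3 * Real.sqrt 3 := by
    rw [show (3:ℕ) = 2 + 1 from rfl, pow_succ, sq3]
  have b2z0 : Real.sqrt 3 ^ 2 * z 0 = 3 * z 0 := by rw [sq3]
  have b3z0 : Real.sqrt 3 ^ 3 * z 0 = 3 * Real.sqrt 3 * z 0 := by rw [hs3]
  have b2z1 : Real.sqrt 3 ^ 2 * z 1 = 3 * z 1 := by rw [sq3]
  have b3z1 : Real.sqrt 3 ^ 3 * z 1 = 3 * Real.sqrt 3 * z 1 := by rw [hs3]
  have b2w0 : Real.sqrt 3 ^ 2 * w 0 = 3 * w 0 := by rw [sq3]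
  have b3w0 : Real.sqrt 3 ^ 3 * w 0 = 3 * Real.sqrt 3 * w 0 := by rw [hs3]
  have b2w1 : Real.sqrt 3 ^ 2 * w 1 = 3 * w 1 := by rw [sq3]
  have b3w1 : Real.sqrt 3 ^ 3 * w 1 = 3 * Real.sqrt 3 * w 1 := by rw [hs3]
  simp only [koch_1_0, koch_1_1, koch_1_2, koch_1_3, koch_1_4, sim_c0, sim_c1, sub_c, add_c, smul_c,
    pt_c0, pt_c1, w60_c0, w60_c1, wm120_c0, wm120_c1]
  linarith [hx, hy, sq3, hs3, b2z0, b3z0, b2z1, b3z1, b2w0, b3w0, b2w1, b3w1, s3_gt, s3_lt, s3nn]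

lemma cfgA_1_3 (z w : E2) (hz : inT z) (hw : inT w) :
    Real.sqrt 3/6 ≤ dist (sim (koch 1 1) (koch 1 2 - koch 1 1) z) (sim (koch 1 3) (koch 1 4 - koch 1 3) w) := by
  obtain ⟨hz1, hz2, hz3⟩ := hz
  obtain ⟨hw1, hw2, hw3⟩ := hw
  have hx : ((0) + (0) * Real.sqrt 3) * z 0 + ((-1/3) + (0) * Real.sqrt 3) * z 1 ≤ ((0) + (0) * Real.sqrt 3) :=
    tri_bound (z 0) (z 1) _ _ ((0) + (-1/18) * Real.sqrt 3) _ hz1 hz2 hz3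
      (by linear_combination ((-1/9) * z 1) * sq3)
      (by linarith [s3_gt, s3_lt]) (by linarith [s3_gt, s3_lt])
      (by linarith [s3_gt, s3_lt])
  have hy : ((0) + (-1/6) * Real.sqrt 3) * w 0 + ((1/6) + (0) * Real.sqrt 3) * w 1 ≤ ((0) + (0) * Real.sqrt 3) :=
    tri_bound (w 0) (w 1) _ _ ((0) + (1/36) * Real.sqrt 3) _ hw1 hw2 hw3
      (by linear_combination ((1/18) * w 1) * sq3)
      (by linarith [s3_gt, s3_lt]) (by linarith [s3_gt, s3_lt])
      (by linarith [s3_gt, s3_lt])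
  refine dist_ge_of_sep _ _ ((0) + (1/2) * Real.sqrt 3) ((-1/2) + (0) * Real.sqrt 3) _
    (by linear_combination ((1/4):ℝ) * sq3) ?_
  have hs3 : Real.sqrt 3 ^ 3 = 3 * Real.sqrt 3 := by
    rw [show (3:ℕ) = 2 + 1 from rfl, pow_succ, sq3]
  have b2z0 : Real.sqrt 3 ^ 2 * z 0 = 3 * z 0 := by rw [sq3]
  have b3z0 : Real.sqrt 3 ^ 3 * z 0 = 3 * Real.sqrt 3 * z 0 := by rw [hs3]
  have b2z1 : Real.sqrt 3 ^ 2 * z 1 = 3 * z 1 := by rw [sq3]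
  have b3z1 : Real.sqrt 3 ^ 3 * z 1 = 3 * Real.sqrt 3 * z 1 := by rw [hs3]
  have b2w0 : Real.sqrt 3 ^ 2 * w 0 = 3 * w 0 := by rw [sq3]
  have b3w0 : Real.sqrt 3 ^ 3 * w 0 = 3 * Real.sqrt 3 * w 0 := by rw [hs3]
  have b2w1 : Real.sqrt 3 ^ 2 * w 1 = 3 * w 1 := by rw [sq3]
  have b3w1 : Real.sqrt 3 ^ 3 * w 1 = 3 * Real.sqrt 3 * w 1 := by rw [hs3]
  simp only [koch_1_0, koch_1_1, koch_1_2, koch_1_3, koch_1_4, sim_c0, sim_c1, sub_c, add_c, smul_c,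
    pt_c0, pt_c1, w60_c0, w60_c1, wm120_c0, wm120_c1]
  linarith [hx, hy, sq3, hs3, b2z0, b3z0, b2z1, b3z1, b2w0, b3w0, b2w1, b3w1, s3_gt, s3_lt, s3nn]

lemma cfgBL_0_w60 (z w : E2) (hz : inT z) (hw : inT w) :
    Real.sqrt 3/6 ≤ dist (sim (koch 1 0) (koch 1 1 - koch 1 0) z) (sim (pt 1 0) w60 w) := by
  obtain ⟨hz1, hz2, hz3⟩ := hz
  obtain ⟨hw1, hw2, hw3⟩ := hw
  have hx : ((1/3) + (0) * Real.sqrt 3) * z 0 + ((0) + (0) * Real.sqrt 3) * z 1 ≤ ((1/3) + (0) * Real.sqrt 3) :=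
    tri_bound (z 0) (z 1) _ _ ((0) + (0) * Real.sqrt 3) _ hz1 hz2 hz3
      (by linear_combination ((0) * z 1) * sq3)
      (by linarith [s3_gt, s3_lt]) (by linarith [s3_gt, s3_lt])
      (by linarith [s3_gt, s3_lt])
  have hy : ((-1/2) + (0) * Real.sqrt 3) * w 0 + ((0) + (1/2) * Real.sqrt 3) * w 1 ≤ ((0) + (0) * Real.sqrt 3) :=
    tri_bound (w 0) (w 1) _ _ ((1/4) + (0) * Real.sqrt 3) _ hw1 hw2 hw3
      (by linear_combination ((0) * w 1) * sq3)
      (by linarith [s3_gt, s3_lt]) (by linarith [s3_gt, s3_lt])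
      (by linarith [s3_gt, s3_lt])
  refine dist_ge_of_sep _ _ ((1) + (0) * Real.sqrt 3) ((0) + (0) * Real.sqrt 3) _
    (by linear_combination ((0):ℝ) * sq3) ?_
  have hs3 : Real.sqrt 3 ^ 3 = 3 * Real.sqrt 3 := by
    rw [show (3:ℕ) = 2 + 1 from rfl, pow_succ, sq3]
  have b2z0 : Real.sqrt 3 ^ 2 * z 0 = 3 * z 0 := by rw [sq3]
  have b3z0 : Real.sqrt 3 ^ 3 * z 0 = 3 * Real.sqrt 3 * z 0 := by rw [hs3]
  have b2z1 : Real.sqrt 3 ^ 2 * z 1 = 3 * z 1 := by rw [sq3]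
  have b3z1 : Real.sqrt 3 ^ 3 * z 1 = 3 * Real.sqrt 3 * z 1 := by rw [hs3]
  have b2w0 : Real.sqrt 3 ^ 2 * w 0 = 3 * w 0 := by rw [sq3]
  have b3w0 : Real.sqrt 3 ^ 3 * w 0 = 3 * Real.sqrt 3 * w 0 := by rw [hs3]
  have b2w1 : Real.sqrt 3 ^ 2 * w 1 = 3 * w 1 := by rw [sq3]
  have b3w1 : Real.sqrt 3 ^ 3 * w 1 = 3 * Real.sqrt 3 * w 1 := by rw [hs3]
  simp only [koch_1_0, koch_1_1, koch_1_2, koch_1_3, koch_1_4, sim_c0, sim_c1, sub_c, add_c, smul_c,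
    pt_c0, pt_c1, w60_c0, w60_c1, wm120_c0, wm120_c1]
  linarith [hx, hy, sq3, hs3, b2z0, b3z0, b2z1, b3z1, b2w0, b3w0, b2w1, b3w1, s3_gt, s3_lt, s3nn]

lemma cfgBL_1_w60 (z w : E2) (hz : inT z) (hw : inT w) :
    Real.sqrt 3/6 ≤ dist (sim (koch 1 1) (koch 1 2 - koch 1 1) z) (sim (pt 1 0) w60 w) := by
  obtain ⟨hz1, hz2, hz3⟩ := hz
  obtain ⟨hw1, hw2, hw3⟩ := hw
  have hx : ((1/6) + (0) * Real.sqrt 3) * z 0 + ((0) + (-1/6) * Real.sqrt 3) * z 1 ≤ ((1/6) + (0) * Real.sqrt 3) :=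
    tri_bound (z 0) (z 1) _ _ ((-1/12) + (0) * Real.sqrt 3) _ hz1 hz2 hz3
      (by linear_combination ((0) * z 1) * sq3)
      (by linarith [s3_gt, s3_lt]) (by linarith [s3_gt, s3_lt])
      (by linarith [s3_gt, s3_lt])
  have hy : ((-1/2) + (0) * Real.sqrt 3) * w 0 + ((0) + (1/2) * Real.sqrt 3) * w 1 ≤ ((0) + (0) * Real.sqrt 3) :=
    tri_bound (w 0) (w 1) _ _ ((1/4) + (0) * Real.sqrt 3) _ hw1 hw2 hw3
      (by linear_combination ((0) * w 1) * sq3)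
      (by linarith [s3_gt, s3_lt]) (by linarith [s3_gt, s3_lt])
      (by linarith [s3_gt, s3_lt])
  refine dist_ge_of_sep _ _ ((1) + (0) * Real.sqrt 3) ((0) + (0) * Real.sqrt 3) _
    (by linear_combination ((0):ℝ) * sq3) ?_
  have hs3 : Real.sqrt 3 ^ 3 = 3 * Real.sqrt 3 := by
    rw [show (3:ℕ) = 2 + 1 from rfl, pow_succ, sq3]
  have b2z0 : Real.sqrt 3 ^ 2 * z 0 = 3 * z 0 := by rw [sq3]
  have b3z0 : Real.sqrt 3 ^ 3 * z 0 = 3 * Real.sqrt 3 * z 0 := by rw [hs3]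
  have b2z1 : Real.sqrt 3 ^ 2 * z 1 = 3 * z 1 := by rw [sq3]
  have b3z1 : Real.sqrt 3 ^ 3 * z 1 = 3 * Real.sqrt 3 * z 1 := by rw [hs3]
  have b2w0 : Real.sqrt 3 ^ 2 * w 0 = 3 * w 0 := by rw [sq3]
  have b3w0 : Real.sqrt 3 ^ 3 * w 0 = 3 * Real.sqrt 3 * w 0 := by rw [hs3]
  have b2w1 : Real.sqrt 3 ^ 2 * w 1 = 3 * w 1 := by rw [sq3]
  have b3w1 : Real.sqrt 3 ^ 3 * w 1 = 3 * Real.sqrt 3 * w 1 := by rw [hs3]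
  simp only [koch_1_0, koch_1_1, koch_1_2, koch_1_3, koch_1_4, sim_c0, sim_c1, sub_c, add_c, smul_c,
    pt_c0, pt_c1, w60_c0, w60_c1, wm120_c0, wm120_c1]
  linarith [hx, hy, sq3, hs3, b2z0, b3z0, b2z1, b3z1, b2w0, b3w0, b2w1, b3w1, s3_gt, s3_lt, s3nn]

lemma cfgBL_2_w60 (z w : E2) (hz : inT z) (hw : inT w) :
    Real.sqrt 3/6 ≤ dist (sim (koch 1 2) (koch 1 3 - koch 1 2) z) (sim (pt 1 0) w60 w) := by
  obtain ⟨hz1, hz2, hz3⟩ := hz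
  obtain ⟨hw1, hw2, hw3⟩ := hw
  have hx : ((1/6) + (0) * Real.sqrt 3) * z 0 + ((0) + (1/6) * Real.sqrt 3) * z 1 ≤ ((1/6) + (0) * Real.sqrt 3) :=
    tri_bound (z 0) (z 1) _ _ ((1/12) + (0) * Real.sqrt 3) _ hz1 hz2 hz3
      (by linear_combination ((0) * z 1) * sq3)
      (by linarith [s3_gt, s3_lt]) (by linarith [s3_gt, s3_lt])
      (by linarith [s3_gt, s3_lt])
  have hy : ((-1/2) + (0) * Real.sqrt 3) * w 0 + ((0) + (1/2) * Real.sqrt 3) * w 1 ≤ ((0) + (0) * Real.sqrt 3) :=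
    tri_bound (w 0) (w 1) _ _ ((1/4) + (0) * Real.sqrt 3) _ hw1 hw2 hw3
      (by linear_combination ((0) * w 1) * sq3)
      (by linarith [s3_gt, s3_lt]) (by linarith [s3_gt, s3_lt])
      (by linarith [s3_gt, s3_lt])
  refine dist_ge_of_sep _ _ ((1) + (0) * Real.sqrt 3) ((0) + (0) * Real.sqrt 3) _
    (by linear_combination ((0):ℝ) * sq3) ?_
  have hs3 : Real.sqrt 3 ^ 3 = 3 * Real.sqrt 3 := by
    rw [show (3:ℕ) = 2 + 1 from rfl, pow_succ, sq3]
  have b2z0 : Real.sqrt 3 ^ 2 * z 0 = 3 * z 0 := by rw [sq3]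
  have b3z0 : Real.sqrt 3 ^ 3 * z 0 = 3 * Real.sqrt 3 * z 0 := by rw [hs3]
  have b2z1 : Real.sqrt 3 ^ 2 * z 1 = 3 * z 1 := by rw [sq3]
  have b3z1 : Real.sqrt 3 ^ 3 * z 1 = 3 * Real.sqrt 3 * z 1 := by rw [hs3]
  have b2w0 : Real.sqrt 3 ^ 2 * w 0 = 3 * w 0 := by rw [sq3]
  have b3w0 : Real.sqrt 3 ^ 3 * w 0 = 3 * Real.sqrt 3 * w 0 := by rw [hs3]
  have b2w1 : Real.sqrt 3 ^ 2 * w 1 = 3 * w 1 := by rw [sq3]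
  have b3w1 : Real.sqrt 3 ^ 3 * w 1 = 3 * Real.sqrt 3 * w 1 := by rw [hs3]
  simp only [koch_1_0, koch_1_1, koch_1_2, koch_1_3, koch_1_4, sim_c0, sim_c1, sub_c, add_c, smul_c,
    pt_c0, pt_c1, w60_c0, w60_c1, wm120_c0, wm120_c1]
  linarith [hx, hy, sq3, hs3, b2z0, b3z0, b2z1, b3z1, b2w0, b3w0, b2w1, b3w1, s3_gt, s3_lt, s3nn]

lemma cfgBR_w60_1 (z w : E2) (hz : inT z) (hw : inT w) :
    Real.sqrt 3/6 ≤ dist z (sim (pt 1 0) w60 (sim (koch 1 1) (koch 1 2 - koch 1 1) w)) := by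
  obtain ⟨hz1, hz2, hz3⟩ := hz
  obtain ⟨hw1, hw2, hw3⟩ := hw
  have hx : ((1/2) + (0) * Real.sqrt 3) * z 0 + ((0) + (1/2) * Real.sqrt 3) * z 1 ≤ ((1/2) + (0) * Real.sqrt 3) :=
    tri_bound (z 0) (z 1) _ _ ((1/4) + (0) * Real.sqrt 3) _ hz1 hz2 hz3
      (by linear_combination ((0) * z 1) * sq3)
      (by linarith [s3_gt, s3_lt]) (by linarith [s3_gt, s3_lt])
      (by linarith [s3_gt, s3_lt])
  have hy : ((-1/6) + (0) * Real.sqrt 3) * w 0 + ((0) + (1/6) * Real.sqrt 3) * w 1 ≤ ((0) + (0) * Real.sqrt 3) :=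
    tri_bound (w 0) (w 1) _ _ ((1/12) + (0) * Real.sqrt 3) _ hw1 hw2 hw3
      (by linear_combination ((0) * w 1) * sq3)
      (by linarith [s3_gt, s3_lt]) (by linarith [s3_gt, s3_lt])
      (by linarith [s3_gt, s3_lt])
  refine dist_ge_of_sep _ _ ((1/2) + (0) * Real.sqrt 3) ((0) + (1/2) * Real.sqrt 3) _
    (by linear_combination ((1/4):ℝ) * sq3) ?_
  have hs3 : Real.sqrt 3 ^ 3 = 3 * Real.sqrt 3 := by
    rw [show (3:ℕ) = 2 + 1 from rfl, pow_succ, sq3]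
  have b2z0 : Real.sqrt 3 ^ 2 * z 0 = 3 * z 0 := by rw [sq3]
  have b3z0 : Real.sqrt 3 ^ 3 * z 0 = 3 * Real.sqrt 3 * z 0 := by rw [hs3]
  have b2z1 : Real.sqrt 3 ^ 2 * z 1 = 3 * z 1 := by rw [sq3]
  have b3z1 : Real.sqrt 3 ^ 3 * z 1 = 3 * Real.sqrt 3 * z 1 := by rw [hs3]
  have b2w0 : Real.sqrt 3 ^ 2 * w 0 = 3 * w 0 := by rw [sq3]
  have b3w0 : Real.sqrt 3 ^ 3 * w 0 = 3 * Real.sqrt 3 * w 0 := by rw [hs3]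
  have b2w1 : Real.sqrt 3 ^ 2 * w 1 = 3 * w 1 := by rw [sq3]
  have b3w1 : Real.sqrt 3 ^ 3 * w 1 = 3 * Real.sqrt 3 * w 1 := by rw [hs3]
  simp only [koch_1_0, koch_1_1, koch_1_2, koch_1_3, koch_1_4, sim_c0, sim_c1, sub_c, add_c, smul_c,
    pt_c0, pt_c1, w60_c0, w60_c1, wm120_c0, wm120_c1]
  linarith [hx, hy, sq3, hs3, b2z0, b3z0, b2z1, b3z1, b2w0, b3w0, b2w1, b3w1, s3_gt, s3_lt, s3nn]

lemma cfgBR_w60_2 (z w : E2) (hz : inT z) (hw : inT w) :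
    Real.sqrt 3/6 ≤ dist z (sim (pt 1 0) w60 (sim (koch 1 2) (koch 1 3 - koch 1 2) w)) := by
  obtain ⟨hz1, hz2, hz3⟩ := hz
  obtain ⟨hw1, hw2, hw3⟩ := hw
  have hx : ((0) + (1/2) * Real.sqrt 3) * z 0 + ((1/2) + (0) * Real.sqrt 3) * z 1 ≤ ((0) + (1/2) * Real.sqrt 3) :=
    tri_bound (z 0) (z 1) _ _ ((0) + (1/12) * Real.sqrt 3) _ hz1 hz2 hz3
      (by linear_combination ((1/6) * z 1) * sq3)
      (by linarith [s3_gt, s3_lt]) (by linarith [s3_gt, s3_lt])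
      (by linarith [s3_gt, s3_lt])
  have hy : ((0) + (-1/6) * Real.sqrt 3) * w 0 + ((-1/6) + (0) * Real.sqrt 3) * w 1 ≤ ((0) + (0) * Real.sqrt 3) :=
    tri_bound (w 0) (w 1) _ _ ((0) + (-1/36) * Real.sqrt 3) _ hw1 hw2 hw3
      (by linear_combination ((-1/18) * w 1) * sq3)
      (by linarith [s3_gt, s3_lt]) (by linarith [s3_gt, s3_lt])
      (by linarith [s3_gt, s3_lt])
  refine dist_ge_of_sep _ _ ((0) + (1/2) * Real.sqrt 3) ((1/2) + (0) * Real.sqrt 3) _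
    (by linear_combination ((1/4):ℝ) * sq3) ?_
  have hs3 : Real.sqrt 3 ^ 3 = 3 * Real.sqrt 3 := by
    rw [show (3:ℕ) = 2 + 1 from rfl, pow_succ, sq3]
  have b2z0 : Real.sqrt 3 ^ 2 * z 0 = 3 * z 0 := by rw [sq3]
  have b3z0 : Real.sqrt 3 ^ 3 * z 0 = 3 * Real.sqrt 3 * z 0 := by rw [hs3]
  have b2z1 : Real.sqrt 3 ^ 2 * z 1 = 3 * z 1 := by rw [sq3]
  have b3z1 : Real.sqrt 3 ^ 3 * z 1 = 3 * Real.sqrt 3 * z 1 := by rw [hs3]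
  have b2w0 : Real.sqrt 3 ^ 2 * w 0 = 3 * w 0 := by rw [sq3]
  have b3w0 : Real.sqrt 3 ^ 3 * w 0 = 3 * Real.sqrt 3 * w 0 := by rw [hs3]
  have b2w1 : Real.sqrt 3 ^ 2 * w 1 = 3 * w 1 := by rw [sq3]
  have b3w1 : Real.sqrt 3 ^ 3 * w 1 = 3 * Real.sqrt 3 * w 1 := by rw [hs3]
  simp only [koch_1_0, koch_1_1, koch_1_2, koch_1_3, koch_1_4, sim_c0, sim_c1, sub_c, add_c, smul_c,
    pt_c0, pt_c1, w60_c0, w60_c1, wm120_c0, wm120_c1]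
  linarith [hx, hy, sq3, hs3, b2z0, b3z0, b2z1, b3z1, b2w0, b3w0, b2w1, b3w1, s3_gt, s3_lt, s3nn]

lemma cfgBR_w60_3 (z w : E2) (hz : inT z) (hw : inT w) :
    Real.sqrt 3/6 ≤ dist z (sim (pt 1 0) w60 (sim (koch 1 3) (koch 1 4 - koch 1 3) w)) := by
  obtain ⟨hz1, hz2, hz3⟩ := hz
  obtain ⟨hw1, hw2, hw3⟩ := hw
  have hx : ((1) + (0) * Real.sqrt 3) * z 0 + ((0) + (0) * Real.sqrt 3) * z 1 ≤ ((1) + (0) * Real.sqrt 3) :=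
    tri_bound (z 0) (z 1) _ _ ((0) + (0) * Real.sqrt 3) _ hz1 hz2 hz3
      (by linear_combination ((0) * z 1) * sq3)
      (by linarith [s3_gt, s3_lt]) (by linarith [s3_gt, s3_lt])
      (by linarith [s3_gt, s3_lt])
  have hy : ((-1/6) + (0) * Real.sqrt 3) * w 0 + ((0) + (1/6) * Real.sqrt 3) * w 1 ≤ ((0) + (0) * Real.sqrt 3) :=
    tri_bound (w 0) (w 1) _ _ ((1/12) + (0) * Real.sqrt 3) _ hw1 hw2 hw3
      (by linear_combination ((0) * w 1) * sq3)
      (by linarith [s3_gt, s3_lt]) (by linarith [s3_gt, s3_lt])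
      (by linarith [s3_gt, s3_lt])
  refine dist_ge_of_sep _ _ ((1) + (0) * Real.sqrt 3) ((0) + (0) * Real.sqrt 3) _
    (by linear_combination ((0):ℝ) * sq3) ?_
  have hs3 : Real.sqrt 3 ^ 3 = 3 * Real.sqrt 3 := by
    rw [show (3:ℕ) = 2 + 1 from rfl, pow_succ, sq3]
  have b2z0 : Real.sqrt 3 ^ 2 * z 0 = 3 * z 0 := by rw [sq3]
  have b3z0 : Real.sqrt 3 ^ 3 * z 0 = 3 * Real.sqrt 3 * z 0 := by rw [hs3]
  have b2z1 : Real.sqrt 3 ^ 2 * z 1 = 3 * z 1 := by rw [sq3]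
  have b3z1 : Real.sqrt 3 ^ 3 * z 1 = 3 * Real.sqrt 3 * z 1 := by rw [hs3]
  have b2w0 : Real.sqrt 3 ^ 2 * w 0 = 3 * w 0 := by rw [sq3]
  have b3w0 : Real.sqrt 3 ^ 3 * w 0 = 3 * Real.sqrt 3 * w 0 := by rw [hs3]
  have b2w1 : Real.sqrt 3 ^ 2 * w 1 = 3 * w 1 := by rw [sq3]
  have b3w1 : Real.sqrt 3 ^ 3 * w 1 = 3 * Real.sqrt 3 * w 1 := by rw [hs3]
  simp only [koch_1_0, koch_1_1, koch_1_2, koch_1_3, koch_1_4, sim_c0, sim_c1, sub_c, add_c, smul_c,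
    pt_c0, pt_c1, w60_c0, w60_c1, wm120_c0, wm120_c1]
  linarith [hx, hy, sq3, hs3, b2z0, b3z0, b2z1, b3z1, b2w0, b3w0, b2w1, b3w1, s3_gt, s3_lt, s3nn]

lemma cfgBL_0_wm120 (z w : E2) (hz : inT z) (hw : inT w) :
    Real.sqrt 3/6 ≤ dist (sim (koch 1 0) (koch 1 1 - koch 1 0) z) (sim (pt 1 0) wm120 w) := by
  obtain ⟨hz1, hz2, hz3⟩ := hz
  obtain ⟨hw1, hw2, hw3⟩ := hw
  have hx : ((1/6) + (0) * Real.sqrt 3) * z 0 + ((0) + (-1/6) * Real.sqrt 3) * z 1 ≤ ((1/6) + (0) * Real.sqrt 3) :=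
    tri_bound (z 0) (z 1) _ _ ((-1/12) + (0) * Real.sqrt 3) _ hz1 hz2 hz3
      (by linear_combination ((0) * z 1) * sq3)
      (by linarith [s3_gt, s3_lt]) (by linarith [s3_gt, s3_lt])
      (by linarith [s3_gt, s3_lt])
  have hy : ((-1/2) + (0) * Real.sqrt 3) * w 0 + ((0) + (-1/2) * Real.sqrt 3) * w 1 ≤ ((0) + (0) * Real.sqrt 3) :=
    tri_bound (w 0) (w 1) _ _ ((-1/4) + (0) * Real.sqrt 3) _ hw1 hw2 hw3
      (by linear_combination ((0) * w 1) * sq3)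
      (by linarith [s3_gt, s3_lt]) (by linarith [s3_gt, s3_lt])
      (by linarith [s3_gt, s3_lt])
  refine dist_ge_of_sep _ _ ((1/2) + (0) * Real.sqrt 3) ((0) + (-1/2) * Real.sqrt 3) _
    (by linear_combination ((1/4):ℝ) * sq3) ?_
  have hs3 : Real.sqrt 3 ^ 3 = 3 * Real.sqrt 3 := by
    rw [show (3:ℕ) = 2 + 1 from rfl, pow_succ, sq3]
  have b2z0 : Real.sqrt 3 ^ 2 * z 0 = 3 * z 0 := by rw [sq3]
  have b3z0 : Real.sqrt 3 ^ 3 * z 0 = 3 * Real.sqrt 3 * z 0 := by rw [hs3]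
  have b2z1 : Real.sqrt 3 ^ 2 * z 1 = 3 * z 1 := by rw [sq3]
  have b3z1 : Real.sqrt 3 ^ 3 * z 1 = 3 * Real.sqrt 3 * z 1 := by rw [hs3]
  have b2w0 : Real.sqrt 3 ^ 2 * w 0 = 3 * w 0 := by rw [sq3]
  have b3w0 : Real.sqrt 3 ^ 3 * w 0 = 3 * Real.sqrt 3 * w 0 := by rw [hs3]
  have b2w1 : Real.sqrt 3 ^ 2 * w 1 = 3 * w 1 := by rw [sq3]
  have b3w1 : Real.sqrt 3 ^ 3 * w 1 = 3 * Real.sqrt 3 * w 1 := by rw [hs3]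
  simp only [koch_1_0, koch_1_1, koch_1_2, koch_1_3, koch_1_4, sim_c0, sim_c1, sub_c, add_c, smul_c,
    pt_c0, pt_c1, w60_c0, w60_c1, wm120_c0, wm120_c1]
  linarith [hx, hy, sq3, hs3, b2z0, b3z0, b2z1, b3z1, b2w0, b3w0, b2w1, b3w1, s3_gt, s3_lt, s3nn]

lemma cfgBL_1_wm120 (z w : E2) (hz : inT z) (hw : inT w) :
    Real.sqrt 3/6 ≤ dist (sim (koch 1 1) (koch 1 2 - koch 1 1) z) (sim (pt 1 0) wm120 w) := by
  obtain ⟨hz1, hz2, hz3⟩ := hz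
  obtain ⟨hw1, hw2, hw3⟩ := hw
  have hx : ((-1/6) + (0) * Real.sqrt 3) * z 0 + ((0) + (-1/6) * Real.sqrt 3) * z 1 ≤ ((0) + (0) * Real.sqrt 3) :=
    tri_bound (z 0) (z 1) _ _ ((-1/12) + (0) * Real.sqrt 3) _ hz1 hz2 hz3
      (by linear_combination ((0) * z 1) * sq3)
      (by linarith [s3_gt, s3_lt]) (by linarith [s3_gt, s3_lt])
      (by linarith [s3_gt, s3_lt])
  have hy : ((-1/2) + (0) * Real.sqrt 3) * w 0 + ((0) + (-1/2) * Real.sqrt 3) * w 1 ≤ ((0) + (0) * Real.sqrt 3) :=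
    tri_bound (w 0) (w 1) _ _ ((-1/4) + (0) * Real.sqrt 3) _ hw1 hw2 hw3
      (by linear_combination ((0) * w 1) * sq3)
      (by linarith [s3_gt, s3_lt]) (by linarith [s3_gt, s3_lt])
      (by linarith [s3_gt, s3_lt])
  refine dist_ge_of_sep _ _ ((1/2) + (0) * Real.sqrt 3) ((0) + (-1/2) * Real.sqrt 3) _
    (by linear_combination ((1/4):ℝ) * sq3) ?_
  have hs3 : Real.sqrt 3 ^ 3 = 3 * Real.sqrt 3 := by
    rw [show (3:ℕ) = 2 + 1 from rfl, pow_succ, sq3]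
  have b2z0 : Real.sqrt 3 ^ 2 * z 0 = 3 * z 0 := by rw [sq3]
  have b3z0 : Real.sqrt 3 ^ 3 * z 0 = 3 * Real.sqrt 3 * z 0 := by rw [hs3]
  have b2z1 : Real.sqrt 3 ^ 2 * z 1 = 3 * z 1 := by rw [sq3]
  have b3z1 : Real.sqrt 3 ^ 3 * z 1 = 3 * Real.sqrt 3 * z 1 := by rw [hs3]
  have b2w0 : Real.sqrt 3 ^ 2 * w 0 = 3 * w 0 := by rw [sq3]
  have b3w0 : Real.sqrt 3 ^ 3 * w 0 = 3 * Real.sqrt 3 * w 0 := by rw [hs3]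
  have b2w1 : Real.sqrt 3 ^ 2 * w 1 = 3 * w 1 := by rw [sq3]
  have b3w1 : Real.sqrt 3 ^ 3 * w 1 = 3 * Real.sqrt 3 * w 1 := by rw [hs3]
  simp only [koch_1_0, koch_1_1, koch_1_2, koch_1_3, koch_1_4, sim_c0, sim_c1, sub_c, add_c, smul_c,
    pt_c0, pt_c1, w60_c0, w60_c1, wm120_c0, wm120_c1]
  linarith [hx, hy, sq3, hs3, b2z0, b3z0, b2z1, b3z1, b2w0, b3w0, b2w1, b3w1, s3_gt, s3_lt, s3nn]

lemma cfgBL_2_wm120 (z w : E2) (hz : inT z) (hw : inT w) :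
    Real.sqrt 3/6 ≤ dist (sim (koch 1 2) (koch 1 3 - koch 1 2) z) (sim (pt 1 0) wm120 w) := by
  obtain ⟨hz1, hz2, hz3⟩ := hz
  obtain ⟨hw1, hw2, hw3⟩ := hw
  have hx : ((0) + (1/6) * Real.sqrt 3) * z 0 + ((1/6) + (0) * Real.sqrt 3) * z 1 ≤ ((0) + (1/6) * Real.sqrt 3) :=
    tri_bound (z 0) (z 1) _ _ ((0) + (1/36) * Real.sqrt 3) _ hz1 hz2 hz3
      (by linear_combination ((1/18) * z 1) * sq3)
      (by linarith [s3_gt, s3_lt]) (by linarith [s3_gt, s3_lt])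
      (by linarith [s3_gt, s3_lt])
  have hy : ((0) + (0) * Real.sqrt 3) * w 0 + ((-1) + (0) * Real.sqrt 3) * w 1 ≤ ((0) + (0) * Real.sqrt 3) :=
    tri_bound (w 0) (w 1) _ _ ((0) + (-1/6) * Real.sqrt 3) _ hw1 hw2 hw3
      (by linear_combination ((-1/3) * w 1) * sq3)
      (by linarith [s3_gt, s3_lt]) (by linarith [s3_gt, s3_lt])
      (by linarith [s3_gt, s3_lt])
  refine dist_ge_of_sep _ _ ((0) + (1/2) * Real.sqrt 3) ((-1/2) + (0) * Real.sqrt 3) _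
    (by linear_combination ((1/4):ℝ) * sq3) ?_
  have hs3 : Real.sqrt 3 ^ 3 = 3 * Real.sqrt 3 := by
    rw [show (3:ℕ) = 2 + 1 from rfl, pow_succ, sq3]
  have b2z0 : Real.sqrt 3 ^ 2 * z 0 = 3 * z 0 := by rw [sq3]
  have b3z0 : Real.sqrt 3 ^ 3 * z 0 = 3 * Real.sqrt 3 * z 0 := by rw [hs3]
  have b2z1 : Real.sqrt 3 ^ 2 * z 1 = 3 * z 1 := by rw [sq3]
  have b3z1 : Real.sqrt 3 ^ 3 * z 1 = 3 * Real.sqrt 3 * z 1 := by rw [hs3]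
  have b2w0 : Real.sqrt 3 ^ 2 * w 0 = 3 * w 0 := by rw [sq3]
  have b3w0 : Real.sqrt 3 ^ 3 * w 0 = 3 * Real.sqrt 3 * w 0 := by rw [hs3]
  have b2w1 : Real.sqrt 3 ^ 2 * w 1 = 3 * w 1 := by rw [sq3]
  have b3w1 : Real.sqrt 3 ^ 3 * w 1 = 3 * Real.sqrt 3 * w 1 := by rw [hs3]
  simp only [koch_1_0, koch_1_1, koch_1_2, koch_1_3, koch_1_4, sim_c0, sim_c1, sub_c, add_c, smul_c,
    pt_c0, pt_c1, w60_c0, w60_c1, wm120_c0, wm120_c1]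
  linarith [hx, hy, sq3, hs3, b2z0, b3z0, b2z1, b3z1, b2w0, b3w0, b2w1, b3w1, s3_gt, s3_lt, s3nn]

lemma cfgBR_wm120_1 (z w : E2) (hz : inT z) (hw : inT w) :
    Real.sqrt 3/6 ≤ dist z (sim (pt 1 0) wm120 (sim (koch 1 1) (koch 1 2 - koch 1 1) w)) := by
  obtain ⟨hz1, hz2, hz3⟩ := hz
  obtain ⟨hw1, hw2, hw3⟩ := hw
  have hx : ((0) + (0) * Real.sqrt 3) * z 0 + ((-1) + (0) * Real.sqrt 3) * z 1 ≤ ((0) + (0) * Real.sqrt 3) :=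
    tri_bound (z 0) (z 1) _ _ ((0) + (-1/6) * Real.sqrt 3) _ hz1 hz2 hz3
      (by linear_combination ((-1/3) * z 1) * sq3)
      (by linarith [s3_gt, s3_lt]) (by linarith [s3_gt, s3_lt])
      (by linarith [s3_gt, s3_lt])
  have hy : ((0) + (-1/6) * Real.sqrt 3) * w 0 + ((1/6) + (0) * Real.sqrt 3) * w 1 ≤ ((0) + (0) * Real.sqrt 3) :=
    tri_bound (w 0) (w 1) _ _ ((0) + (1/36) * Real.sqrt 3) _ hw1 hw2 hw3
      (by linear_combination ((1/18) * w 1) * sq3)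
      (by linarith [s3_gt, s3_lt]) (by linarith [s3_gt, s3_lt])
      (by linarith [s3_gt, s3_lt])
  refine dist_ge_of_sep _ _ ((0) + (0) * Real.sqrt 3) ((-1) + (0) * Real.sqrt 3) _
    (by linear_combination ((0):ℝ) * sq3) ?_
  have hs3 : Real.sqrt 3 ^ 3 = 3 * Real.sqrt 3 := by
    rw [show (3:ℕ) = 2 + 1 from rfl, pow_succ, sq3]
  have b2z0 : Real.sqrt 3 ^ 2 * z 0 = 3 * z 0 := by rw [sq3]
  have b3z0 : Real.sqrt 3 ^ 3 * z 0 = 3 * Real.sqrt 3 * z 0 := by rw [hs3]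
  have b2z1 : Real.sqrt 3 ^ 2 * z 1 = 3 * z 1 := by rw [sq3]
  have b3z1 : Real.sqrt 3 ^ 3 * z 1 = 3 * Real.sqrt 3 * z 1 := by rw [hs3]
  have b2w0 : Real.sqrt 3 ^ 2 * w 0 = 3 * w 0 := by rw [sq3]
  have b3w0 : Real.sqrt 3 ^ 3 * w 0 = 3 * Real.sqrt 3 * w 0 := by rw [hs3]
  have b2w1 : Real.sqrt 3 ^ 2 * w 1 = 3 * w 1 := by rw [sq3]
  have b3w1 : Real.sqrt 3 ^ 3 * w 1 = 3 * Real.sqrt 3 * w 1 := by rw [hs3]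
  simp only [koch_1_0, koch_1_1, koch_1_2, koch_1_3, koch_1_4, sim_c0, sim_c1, sub_c, add_c, smul_c,
    pt_c0, pt_c1, w60_c0, w60_c1, wm120_c0, wm120_c1]
  linarith [hx, hy, sq3, hs3, b2z0, b3z0, b2z1, b3z1, b2w0, b3w0, b2w1, b3w1, s3_gt, s3_lt, s3nn]

lemma cfgBR_wm120_2 (z w : E2) (hz : inT z) (hw : inT w) :
    Real.sqrt 3/6 ≤ dist z (sim (pt 1 0) wm120 (sim (koch 1 2) (koch 1 3 - koch 1 2) w)) := by
  obtain ⟨hz1, hz2, hz3⟩ := hz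
  obtain ⟨hw1, hw2, hw3⟩ := hw
  have hx : ((0) + (0) * Real.sqrt 3) * z 0 + ((-1) + (0) * Real.sqrt 3) * z 1 ≤ ((0) + (0) * Real.sqrt 3) :=
    tri_bound (z 0) (z 1) _ _ ((0) + (-1/6) * Real.sqrt 3) _ hz1 hz2 hz3
      (by linear_combination ((-1/3) * z 1) * sq3)
      (by linarith [s3_gt, s3_lt]) (by linarith [s3_gt, s3_lt])
      (by linarith [s3_gt, s3_lt])
  have hy : ((0) + (0) * Real.sqrt 3) * w 0 + ((-1/3) + (0) * Real.sqrt 3) * w 1 ≤ ((0) + (0) * Real.sqrt 3) :=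
    tri_bound (w 0) (w 1) _ _ ((0) + (-1/18) * Real.sqrt 3) _ hw1 hw2 hw3
      (by linear_combination ((-1/9) * w 1) * sq3)
      (by linarith [s3_gt, s3_lt]) (by linarith [s3_gt, s3_lt])
      (by linarith [s3_gt, s3_lt])
  refine dist_ge_of_sep _ _ ((0) + (0) * Real.sqrt 3) ((-1) + (0) * Real.sqrt 3) _
    (by linear_combination ((0):ℝ) * sq3) ?_
  have hs3 : Real.sqrt 3 ^ 3 = 3 * Real.sqrt 3 := by
    rw [show (3:ℕ) = 2 + 1 from rfl, pow_succ, sq3]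
  have b2z0 : Real.sqrt 3 ^ 2 * z 0 = 3 * z 0 := by rw [sq3]
  have b3z0 : Real.sqrt 3 ^ 3 * z 0 = 3 * Real.sqrt 3 * z 0 := by rw [hs3]
  have b2z1 : Real.sqrt 3 ^ 2 * z 1 = 3 * z 1 := by rw [sq3]
  have b3z1 : Real.sqrt 3 ^ 3 * z 1 = 3 * Real.sqrt 3 * z 1 := by rw [hs3]
  have b2w0 : Real.sqrt 3 ^ 2 * w 0 = 3 * w 0 := by rw [sq3]
  have b3w0 : Real.sqrt 3 ^ 3 * w 0 = 3 * Real.sqrt 3 * w 0 := by rw [hs3]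
  have b2w1 : Real.sqrt 3 ^ 2 * w 1 = 3 * w 1 := by rw [sq3]
  have b3w1 : Real.sqrt 3 ^ 3 * w 1 = 3 * Real.sqrt 3 * w 1 := by rw [hs3]
  simp only [koch_1_0, koch_1_1, koch_1_2, koch_1_3, koch_1_4, sim_c0, sim_c1, sub_c, add_c, smul_c,
    pt_c0, pt_c1, w60_c0, w60_c1, wm120_c0, wm120_c1]
  linarith [hx, hy, sq3, hs3, b2z0, b3z0, b2z1, b3z1, b2w0, b3w0, b2w1, b3w1, s3_gt, s3_lt, s3nn]

lemma cfgBR_wm120_3 (z w : E2) (hz : inT z) (hw : inT w) :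
    Real.sqrt 3/6 ≤ dist z (sim (pt 1 0) wm120 (sim (koch 1 3) (koch 1 4 - koch 1 3) w)) := by
  obtain ⟨hz1, hz2, hz3⟩ := hz
  obtain ⟨hw1, hw2, hw3⟩ := hw
  have hx : ((0) + (0) * Real.sqrt 3) * z 0 + ((-1) + (0) * Real.sqrt 3) * z 1 ≤ ((0) + (0) * Real.sqrt 3) :=
    tri_bound (z 0) (z 1) _ _ ((0) + (-1/6) * Real.sqrt 3) _ hz1 hz2 hz3
      (by linear_combination ((-1/3) * z 1) * sq3)
      (by linarith [s3_gt, s3_lt]) (by linarith [s3_gt, s3_lt])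
      (by linarith [s3_gt, s3_lt])
  have hy : ((0) + (-1/6) * Real.sqrt 3) * w 0 + ((-1/6) + (0) * Real.sqrt 3) * w 1 ≤ ((0) + (0) * Real.sqrt 3) :=
    tri_bound (w 0) (w 1) _ _ ((0) + (-1/36) * Real.sqrt 3) _ hw1 hw2 hw3
      (by linear_combination ((-1/18) * w 1) * sq3)
      (by linarith [s3_gt, s3_lt]) (by linarith [s3_gt, s3_lt])
      (by linarith [s3_gt, s3_lt])
  refine dist_ge_of_sep _ _ ((0) + (0) * Real.sqrt 3) ((-1) + (0) * Real.sqrt 3) _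
    (by linear_combination ((0):ℝ) * sq3) ?_
  have hs3 : Real.sqrt 3 ^ 3 = 3 * Real.sqrt 3 := by
    rw [show (3:ℕ) = 2 + 1 from rfl, pow_succ, sq3]
  have b2z0 : Real.sqrt 3 ^ 2 * z 0 = 3 * z 0 := by rw [sq3]
  have b3z0 : Real.sqrt 3 ^ 3 * z 0 = 3 * Real.sqrt 3 * z 0 := by rw [hs3]
  have b2z1 : Real.sqrt 3 ^ 2 * z 1 = 3 * z 1 := by rw [sq3]
  have b3z1 : Real.sqrt 3 ^ 3 * z 1 = 3 * Real.sqrt 3 * z 1 := by rw [hs3]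
  have b2w0 : Real.sqrt 3 ^ 2 * w 0 = 3 * w 0 := by rw [sq3]
  have b3w0 : Real.sqrt 3 ^ 3 * w 0 = 3 * Real.sqrt 3 * w 0 := by rw [hs3]
  have b2w1 : Real.sqrt 3 ^ 2 * w 1 = 3 * w 1 := by rw [sq3]
  have b3w1 : Real.sqrt 3 ^ 3 * w 1 = 3 * Real.sqrt 3 * w 1 := by rw [hs3]
  simp only [koch_1_0, koch_1_1, koch_1_2, koch_1_3, koch_1_4, sim_c0, sim_c1, sub_c, add_c, smul_c,
    pt_c0, pt_c1, w60_c0, w60_c1, wm120_c0, wm120_c1]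
  linarith [hx, hy, sq3, hs3, b2z0, b3z0, b2z1, b3z1, b2w0, b3w0, b2w1, b3w1, s3_gt, s3_lt, s3nn]

lemma cfgV_0 (w : E2) (hw : inT w) :
    Real.sqrt 3/6 ≤ dist (koch 1 0) (sim (koch 1 1) (koch 1 2 - koch 1 1) w) := by
  obtain ⟨hw1, hw2, hw3⟩ := hw
  have hy : ((-1/6) + (0) * Real.sqrt 3) * w 0 + ((0) + (1/6) * Real.sqrt 3) * w 1 ≤ ((0) + (0) * Real.sqrt 3) :=
    tri_bound (w 0) (w 1) _ _ ((1/12) + (0) * Real.sqrt 3) _ hw1 hw2 hw3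
      (by linear_combination ((0) * w 1) * sq3)
      (by linarith [s3_gt, s3_lt]) (by linarith [s3_gt, s3_lt])
      (by linarith [s3_gt, s3_lt])
  refine dist_ge_of_sep _ _ ((1) + (0) * Real.sqrt 3) ((0) + (0) * Real.sqrt 3) _
    (by linear_combination ((0):ℝ) * sq3) ?_
  have hs3 : Real.sqrt 3 ^ 3 = 3 * Real.sqrt 3 := by
    rw [show (3:ℕ) = 2 + 1 from rfl, pow_succ, sq3]
  have b2w0 : Real.sqrt 3 ^ 2 * w 0 = 3 * w 0 := by rw [sq3]
  have b3w0 : Real.sqrt 3 ^ 3 * w 0 = 3 * Real.sqrt 3 * w 0 := by rw [hs3]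
  have b2w1 : Real.sqrt 3 ^ 2 * w 1 = 3 * w 1 := by rw [sq3]
  have b3w1 : Real.sqrt 3 ^ 3 * w 1 = 3 * Real.sqrt 3 * w 1 := by rw [hs3]
  simp only [koch_1_0, koch_1_1, koch_1_2, koch_1_3, koch_1_4, sim_c0, sim_c1, sub_c, add_c, smul_c,
    pt_c0, pt_c1, w60_c0, w60_c1, wm120_c0, wm120_c1]
  linarith [hy, sq3, hs3, b2w0, b3w0, b2w1, b3w1, s3_gt, s3_lt, s3nn]

lemma cfgV_1 (w : E2) (hw : inT w) :
    Real.sqrt 3/6 ≤ dist (koch 1 1) (sim (koch 1 2) (koch 1 3 - koch 1 2) w) := by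
  obtain ⟨hw1, hw2, hw3⟩ := hw
  have hy : ((0) + (0) * Real.sqrt 3) * w 0 + ((-1/3) + (0) * Real.sqrt 3) * w 1 ≤ ((0) + (0) * Real.sqrt 3) :=
    tri_bound (w 0) (w 1) _ _ ((0) + (-1/18) * Real.sqrt 3) _ hw1 hw2 hw3
      (by linear_combination ((-1/9) * w 1) * sq3)
      (by linarith [s3_gt, s3_lt]) (by linarith [s3_gt, s3_lt])
      (by linarith [s3_gt, s3_lt])
  refine dist_ge_of_sep _ _ ((0) + (1/2) * Real.sqrt 3) ((1/2) + (0) * Real.sqrt 3) _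
    (by linear_combination ((1/4):ℝ) * sq3) ?_
  have hs3 : Real.sqrt 3 ^ 3 = 3 * Real.sqrt 3 := by
    rw [show (3:ℕ) = 2 + 1 from rfl, pow_succ, sq3]
  have b2w0 : Real.sqrt 3 ^ 2 * w 0 = 3 * w 0 := by rw [sq3]
  have b3w0 : Real.sqrt 3 ^ 3 * w 0 = 3 * Real.sqrt 3 * w 0 := by rw [hs3]
  have b2w1 : Real.sqrt 3 ^ 2 * w 1 = 3 * w 1 := by rw [sq3]
  have b3w1 : Real.sqrt 3 ^ 3 * w 1 = 3 * Real.sqrt 3 * w 1 := by rw [hs3]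
  simp only [koch_1_0, koch_1_1, koch_1_2, koch_1_3, koch_1_4, sim_c0, sim_c1, sub_c, add_c, smul_c,
    pt_c0, pt_c1, w60_c0, w60_c1, wm120_c0, wm120_c1]
  linarith [hy, sq3, hs3, b2w0, b3w0, b2w1, b3w1, s3_gt, s3_lt, s3nn]

lemma cfgV_2 (w : E2) (hw : inT w) :
    Real.sqrt 3/6 ≤ dist (koch 1 2) (sim (koch 1 3) (koch 1 4 - koch 1 3) w) := by
  obtain ⟨hw1, hw2, hw3⟩ := hw
  have hy : ((-1/6) + (0) * Real.sqrt 3) * w 0 + ((0) + (1/6) * Real.sqrt 3) * w 1 ≤ ((0) + (0) * Real.sqrt 3) :=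
    tri_bound (w 0) (w 1) _ _ ((1/12) + (0) * Real.sqrt 3) _ hw1 hw2 hw3
      (by linear_combination ((0) * w 1) * sq3)
      (by linarith [s3_gt, s3_lt]) (by linarith [s3_gt, s3_lt])
      (by linarith [s3_gt, s3_lt])
  refine dist_ge_of_sep _ _ ((1/2) + (0) * Real.sqrt 3) ((0) + (-1/2) * Real.sqrt 3) _
    (by linear_combination ((1/4):ℝ) * sq3) ?_
  have hs3 : Real.sqrt 3 ^ 3 = 3 * Real.sqrt 3 := by
    rw [show (3:ℕ) = 2 + 1 from rfl, pow_succ, sq3]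
  have b2w0 : Real.sqrt 3 ^ 2 * w 0 = 3 * w 0 := by rw [sq3]
  have b3w0 : Real.sqrt 3 ^ 3 * w 0 = 3 * Real.sqrt 3 * w 0 := by rw [hs3]
  have b2w1 : Real.sqrt 3 ^ 2 * w 1 = 3 * w 1 := by rw [sq3]
  have b3w1 : Real.sqrt 3 ^ 3 * w 1 = 3 * Real.sqrt 3 * w 1 := by rw [hs3]
  simp only [koch_1_0, koch_1_1, koch_1_2, koch_1_3, koch_1_4, sim_c0, sim_c1, sub_c, add_c, smul_c,
    pt_c0, pt_c1, w60_c0, w60_c1, wm120_c0, wm120_c1]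
  linarith [hy, sq3, hs3, b2w0, b3w0, b2w1, b3w1, s3_gt, s3_lt, s3nn]

lemma cfgV3_w60 (w : E2) (hw : inT w) :
    Real.sqrt 3/6 ≤ dist (koch 1 3) (sim (pt 1 0) w60 w) := by
  obtain ⟨hw1, hw2, hw3⟩ := hw
  have hy : ((-1/2) + (0) * Real.sqrt 3) * w 0 + ((0) + (1/2) * Real.sqrt 3) * w 1 ≤ ((0) + (0) * Real.sqrt 3) :=
    tri_bound (w 0) (w 1) _ _ ((1/4) + (0) * Real.sqrt 3) _ hw1 hw2 hw3
      (by linear_combination ((0) * w 1) * sq3)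
      (by linarith [s3_gt, s3_lt]) (by linarith [s3_gt, s3_lt])
      (by linarith [s3_gt, s3_lt])
  refine dist_ge_of_sep _ _ ((1) + (0) * Real.sqrt 3) ((0) + (0) * Real.sqrt 3) _
    (by linear_combination ((0):ℝ) * sq3) ?_
  have hs3 : Real.sqrt 3 ^ 3 = 3 * Real.sqrt 3 := by
    rw [show (3:ℕ) = 2 + 1 from rfl, pow_succ, sq3]
  have b2w0 : Real.sqrt 3 ^ 2 * w 0 = 3 * w 0 := by rw [sq3]
  have b3w0 : Real.sqrt 3 ^ 3 * w 0 = 3 * Real.sqrt 3 * w 0 := by rw [hs3]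
  have b2w1 : Real.sqrt 3 ^ 2 * w 1 = 3 * w 1 := by rw [sq3]
  have b3w1 : Real.sqrt 3 ^ 3 * w 1 = 3 * Real.sqrt 3 * w 1 := by rw [hs3]
  simp only [koch_1_0, koch_1_1, koch_1_2, koch_1_3, koch_1_4, sim_c0, sim_c1, sub_c, add_c, smul_c,
    pt_c0, pt_c1, w60_c0, w60_c1, wm120_c0, wm120_c1]
  linarith [hy, sq3, hs3, b2w0, b3w0, b2w1, b3w1, s3_gt, s3_lt, s3nn]

lemma cfgV3_wm120 (w : E2) (hw : inT w) :
    Real.sqrt 3/6 ≤ dist (koch 1 3) (sim (pt 1 0) wm120 w) := by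
  obtain ⟨hw1, hw2, hw3⟩ := hw
  have hy : ((0) + (0) * Real.sqrt 3) * w 0 + ((-1) + (0) * Real.sqrt 3) * w 1 ≤ ((0) + (0) * Real.sqrt 3) :=
    tri_bound (w 0) (w 1) _ _ ((0) + (-1/6) * Real.sqrt 3) _ hw1 hw2 hw3
      (by linear_combination ((-1/3) * w 1) * sq3)
      (by linarith [s3_gt, s3_lt]) (by linarith [s3_gt, s3_lt])
      (by linarith [s3_gt, s3_lt])
  refine dist_ge_of_sep _ _ ((0) + (1/2) * Real.sqrt 3) ((-1/2) + (0) * Real.sqrt 3) _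
    (by linear_combination ((1/4):ℝ) * sq3) ?_
  have hs3 : Real.sqrt 3 ^ 3 = 3 * Real.sqrt 3 := by
    rw [show (3:ℕ) = 2 + 1 from rfl, pow_succ, sq3]
  have b2w0 : Real.sqrt 3 ^ 2 * w 0 = 3 * w 0 := by rw [sq3]
  have b3w0 : Real.sqrt 3 ^ 3 * w 0 = 3 * Real.sqrt 3 * w 0 := by rw [hs3]
  have b2w1 : Real.sqrt 3 ^ 2 * w 1 = 3 * w 1 := by rw [sq3]
  have b3w1 : Real.sqrt 3 ^ 3 * w 1 = 3 * Real.sqrt 3 * w 1 := by rw [hs3]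
  simp only [koch_1_0, koch_1_1, koch_1_2, koch_1_3, koch_1_4, sim_c0, sim_c1, sub_c, add_c, smul_c,
    pt_c0, pt_c1, w60_c0, w60_c1, wm120_c0, wm120_c1]
  linarith [hy, sq3, hs3, b2w0, b3w0, b2w1, b3w1, s3_gt, s3_lt, s3nn]

lemma cfgVp_0 (z : E2) (hz : inT z) :
    Real.sqrt 3/6 ≤ dist (sim (koch 1 0) (koch 1 1 - koch 1 0) z) (koch 1 2) := by
  obtain ⟨hz1, hz2, hz3⟩ := hz
  have hx : ((0) + (1/6) * Real.sqrt 3) * z 0 + ((1/6) + (0) * Real.sqrt 3) * z 1 ≤ ((0) + (1/6) * Real.sqrt 3) :=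
    tri_bound (z 0) (z 1) _ _ ((0) + (1/36) * Real.sqrt 3) _ hz1 hz2 hz3
      (by linear_combination ((1/18) * z 1) * sq3)
      (by linarith [s3_gt, s3_lt]) (by linarith [s3_gt, s3_lt])
      (by linarith [s3_gt, s3_lt])
  refine dist_ge_of_sep _ _ ((0) + (1/2) * Real.sqrt 3) ((1/2) + (0) * Real.sqrt 3) _
    (by linear_combination ((1/4):ℝ) * sq3) ?_
  have hs3 : Real.sqrt 3 ^ 3 = 3 * Real.sqrt 3 := by
    rw [show (3:ℕ) = 2 + 1 from rfl, pow_succ, sq3]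
  have b2z0 : Real.sqrt 3 ^ 2 * z 0 = 3 * z 0 := by rw [sq3]
  have b3z0 : Real.sqrt 3 ^ 3 * z 0 = 3 * Real.sqrt 3 * z 0 := by rw [hs3]
  have b2z1 : Real.sqrt 3 ^ 2 * z 1 = 3 * z 1 := by rw [sq3]
  have b3z1 : Real.sqrt 3 ^ 3 * z 1 = 3 * Real.sqrt 3 * z 1 := by rw [hs3]
  simp only [koch_1_0, koch_1_1, koch_1_2, koch_1_3, koch_1_4, sim_c0, sim_c1, sub_c, add_c, smul_c,
    pt_c0, pt_c1, w60_c0, w60_c1, wm120_c0, wm120_c1]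
  linarith [hx, sq3, hs3, b2z0, b3z0, b2z1, b3z1, s3_gt, s3_lt, s3nn]

lemma cfgVp_1 (z : E2) (hz : inT z) :
    Real.sqrt 3/6 ≤ dist (sim (koch 1 1) (koch 1 2 - koch 1 1) z) (koch 1 3) := by
  obtain ⟨hz1, hz2, hz3⟩ := hz
  have hx : ((0) + (0) * Real.sqrt 3) * z 0 + ((-1/3) + (0) * Real.sqrt 3) * z 1 ≤ ((0) + (0) * Real.sqrt 3) :=
    tri_bound (z 0) (z 1) _ _ ((0) + (-1/18) * Real.sqrt 3) _ hz1 hz2 hz3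
      (by linear_combination ((-1/9) * z 1) * sq3)
      (by linarith [s3_gt, s3_lt]) (by linarith [s3_gt, s3_lt])
      (by linarith [s3_gt, s3_lt])
  refine dist_ge_of_sep _ _ ((0) + (1/2) * Real.sqrt 3) ((-1/2) + (0) * Real.sqrt 3) _
    (by linear_combination ((1/4):ℝ) * sq3) ?_
  have hs3 : Real.sqrt 3 ^ 3 = 3 * Real.sqrt 3 := by
    rw [show (3:ℕ) = 2 + 1 from rfl, pow_succ, sq3]
  have b2z0 : Real.sqrt 3 ^ 2 * z 0 = 3 * z 0 := by rw [sq3]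
  have b3z0 : Real.sqrt 3 ^ 3 * z 0 = 3 * Real.sqrt 3 * z 0 := by rw [hs3]
  have b2z1 : Real.sqrt 3 ^ 2 * z 1 = 3 * z 1 := by rw [sq3]
  have b3z1 : Real.sqrt 3 ^ 3 * z 1 = 3 * Real.sqrt 3 * z 1 := by rw [hs3]
  simp only [koch_1_0, koch_1_1, koch_1_2, koch_1_3, koch_1_4, sim_c0, sim_c1, sub_c, add_c, smul_c,
    pt_c0, pt_c1, w60_c0, w60_c1, wm120_c0, wm120_c1]
  linarith [hx, sq3, hs3, b2z0, b3z0, b2z1, b3z1, s3_gt, s3_lt, s3nn]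

lemma cfgVp_2 (z : E2) (hz : inT z) :
    Real.sqrt 3/6 ≤ dist (sim (koch 1 2) (koch 1 3 - koch 1 2) z) (koch 1 4) := by
  obtain ⟨hz1, hz2, hz3⟩ := hz
  have hx : ((1/6) + (0) * Real.sqrt 3) * z 0 + ((0) + (1/6) * Real.sqrt 3) * z 1 ≤ ((1/6) + (0) * Real.sqrt 3) :=
    tri_bound (z 0) (z 1) _ _ ((1/12) + (0) * Real.sqrt 3) _ hz1 hz2 hz3
      (by linear_combination ((0) * z 1) * sq3)
      (by linarith [s3_gt, s3_lt]) (by linarith [s3_gt, s3_lt])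
      (by linarith [s3_gt, s3_lt])
  refine dist_ge_of_sep _ _ ((1) + (0) * Real.sqrt 3) ((0) + (0) * Real.sqrt 3) _
    (by linear_combination ((0):ℝ) * sq3) ?_
  have hs3 : Real.sqrt 3 ^ 3 = 3 * Real.sqrt 3 := by
    rw [show (3:ℕ) = 2 + 1 from rfl, pow_succ, sq3]
  have b2z0 : Real.sqrt 3 ^ 2 * z 0 = 3 * z 0 := by rw [sq3]
  have b3z0 : Real.sqrt 3 ^ 3 * z 0 = 3 * Real.sqrt 3 * z 0 := by rw [hs3]
  have b2z1 : Real.sqrt 3 ^ 2 * z 1 = 3 * z 1 := by rw [sq3]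
  have b3z1 : Real.sqrt 3 ^ 3 * z 1 = 3 * Real.sqrt 3 * z 1 := by rw [hs3]
  simp only [koch_1_0, koch_1_1, koch_1_2, koch_1_3, koch_1_4, sim_c0, sim_c1, sub_c, add_c, smul_c,
    pt_c0, pt_c1, w60_c0, w60_c1, wm120_c0, wm120_c1]
  linarith [hx, sq3, hs3, b2z0, b3z0, b2z1, b3z1, s3_gt, s3_lt, s3nn]

lemma cfgVp3_w60 (z : E2) (hz : inT z) :
    Real.sqrt 3/6 ≤ dist (sim (koch 1 3) (koch 1 4 - koch 1 3) z) (sim (pt 1 0) w60 (koch 1 1)) := by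
  obtain ⟨hz1, hz2, hz3⟩ := hz
  have hx : ((0) + (1/6) * Real.sqrt 3) * z 0 + ((1/6) + (0) * Real.sqrt 3) * z 1 ≤ ((0) + (1/6) * Real.sqrt 3) :=
    tri_bound (z 0) (z 1) _ _ ((0) + (1/36) * Real.sqrt 3) _ hz1 hz2 hz3
      (by linear_combination ((1/18) * z 1) * sq3)
      (by linarith [s3_gt, s3_lt]) (by linarith [s3_gt, s3_lt])
      (by linarith [s3_gt, s3_lt])
  refine dist_ge_of_sep _ _ ((0) + (1/2) * Real.sqrt 3) ((1/2) + (0) * Real.sqrt 3) _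
    (by linear_combination ((1/4):ℝ) * sq3) ?_
  have hs3 : Real.sqrt 3 ^ 3 = 3 * Real.sqrt 3 := by
    rw [show (3:ℕ) = 2 + 1 from rfl, pow_succ, sq3]
  have b2z0 : Real.sqrt 3 ^ 2 * z 0 = 3 * z 0 := by rw [sq3]
  have b3z0 : Real.sqrt 3 ^ 3 * z 0 = 3 * Real.sqrt 3 * z 0 := by rw [hs3]
  have b2z1 : Real.sqrt 3 ^ 2 * z 1 = 3 * z 1 := by rw [sq3]
  have b3z1 : Real.sqrt 3 ^ 3 * z 1 = 3 * Real.sqrt 3 * z 1 := by rw [hs3]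
  simp only [koch_1_0, koch_1_1, koch_1_2, koch_1_3, koch_1_4, sim_c0, sim_c1, sub_c, add_c, smul_c,
    pt_c0, pt_c1, w60_c0, w60_c1, wm120_c0, wm120_c1]
  linarith [hx, sq3, hs3, b2z0, b3z0, b2z1, b3z1, s3_gt, s3_lt, s3nn]

lemma cfgVp3_wm120 (z : E2) (hz : inT z) :
    Real.sqrt 3/6 ≤ dist (sim (koch 1 3) (koch 1 4 - koch 1 3) z) (sim (pt 1 0) wm120 (koch 1 1)) := by
  obtain ⟨hz1, hz2, hz3⟩ := hz
  have hx : ((0) + (0) * Real.sqrt 3) * z 0 + ((-1/3) + (0) * Real.sqrt 3) * z 1 ≤ ((0) + (0) * Real.sqrt 3) :=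
    tri_bound (z 0) (z 1) _ _ ((0) + (-1/18) * Real.sqrt 3) _ hz1 hz2 hz3
      (by linear_combination ((-1/9) * z 1) * sq3)
      (by linarith [s3_gt, s3_lt]) (by linarith [s3_gt, s3_lt])
      (by linarith [s3_gt, s3_lt])
  refine dist_ge_of_sep _ _ ((0) + (0) * Real.sqrt 3) ((-1) + (0) * Real.sqrt 3) _
    (by linear_combination ((0):ℝ) * sq3) ?_
  have hs3 : Real.sqrt 3 ^ 3 = 3 * Real.sqrt 3 := by
    rw [show (3:ℕ) = 2 + 1 from rfl, pow_succ, sq3]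
  have b2z0 : Real.sqrt 3 ^ 2 * z 0 = 3 * z 0 := by rw [sq3]
  have b3z0 : Real.sqrt 3 ^ 3 * z 0 = 3 * Real.sqrt 3 * z 0 := by rw [hs3]
  have b2z1 : Real.sqrt 3 ^ 2 * z 1 = 3 * z 1 := by rw [sq3]
  have b3z1 : Real.sqrt 3 ^ 3 * z 1 = 3 * Real.sqrt 3 * z 1 := by rw [hs3]
  simp only [koch_1_0, koch_1_1, koch_1_2, koch_1_3, koch_1_4, sim_c0, sim_c1, sub_c, add_c, smul_c,
    pt_c0, pt_c1, w60_c0, w60_c1, wm120_c0, wm120_c1]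
  linarith [hx, sq3, hs3, b2z0, b3z0, b2z1, b3z1, s3_gt, s3_lt, s3nn]

end KochAux

namespace KochAux

lemma koch_zero : ∀ m, koch m 0 = pt 0 0 := by
  intro m
  induction m with
  | zero => exact koch_zero_zero
  | succ m IH => rw [koch_succ]; norm_num [IH]

lemma koch_mult (i m p : ℕ) : koch (i + m) (p * 4 ^ m) = koch i p := by
  have h := koch_sim m i p 0 (Nat.zero_le _)
  rw [Nat.add_zero] at h
  rw [h, koch_zero, sim_vzero]

lemma child_frame (i E r r' : ℕ) (h : r' = r + 1) (hr : r ≤ 3) (z : E2) :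
    sim (koch (i+1) (E*4+r)) (koch (i+1) (E*4+r+1) - koch (i+1) (E*4+r)) z
      = sim (koch i E) (koch i (E+1) - koch i E)
          (sim (koch 1 r) (koch 1 r' - koch 1 r) z) := by
  subst h
  rw [sim_comp]
  rw [show E*4+r = E*4^1+r by norm_num]
  rw [show E*4^1+r+1 = E*4^1+(r+1) by omega]
  rw [koch_sim 1 i E r (by omega), koch_sim 1 i E (r+1) (by omega), sim_sub]

lemma sim_vone' (i E : ℕ) :
    sim (koch i E) (koch i (E+1) - koch i E) (pt 1 0) = koch i (E+1) := by
  rw [sim_vone]; abel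

def onArc (i e : ℕ) (x : E2) : Prop :=
  ∃ z, inT z ∧ x = sim (koch i e) (koch i (e+1) - koch i e) z

lemma onArc_koch (i m p t : ℕ) (ht : t ≤ 4 ^ m) : onArc i p (koch (i+m) (p * 4^m + t)) :=
  ⟨koch m t, koch_mem_T m t ht, koch_sim m i p t ht⟩

lemma onArc_start (i p : ℕ) : onArc i p (koch i p) :=
  ⟨pt 0 0, inT_zero, (sim_vzero _ _).symm⟩

lemma onArc_end (i p : ℕ) : onArc i p (koch i (p+1)) :=
  ⟨pt 1 0, inT_one, (sim_vone' i p).symm⟩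

lemma onArc_parent (i E r : ℕ) (hr : r ≤ 3) (x : E2) (h : onArc (i+1) (E*4+r) x) :
    onArc i E x := by
  obtain ⟨z, hz, rfl⟩ := h
  exact ⟨sim (koch 1 r) (koch 1 (r+1) - koch 1 r) z, gen_maps_T r hr z hz,
    child_frame i E r (r+1) rfl hr z⟩

lemma absorb_F (i E : ℕ) (ω y w' : E2)
    (ht : koch i (E+1+1) - koch i (E+1) = cmul (koch i (E+1) - koch i E) ω)
    (hyz : y = sim (koch i (E+1)) (koch i (E+1+1) - koch i (E+1)) w') :
    y = sim (koch i E) (koch i (E+1) - koch i E) (sim (pt 1 0) ω w') := by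
  rw [sim_comp, sim_vone', ← ht]; exact hyz

lemma frame_bound (i E : ℕ) (hE : E + 1 ≤ 4 ^ i) (X Y : E2)
    (h : Real.sqrt 3/6 ≤ dist X Y) :
    Real.sqrt 3/2 * (1/3:ℝ)^(i+1) ≤
      dist (sim (koch i E) (koch i (E+1) - koch i E) X)
           (sim (koch i E) (koch i (E+1) - koch i E) Y) := by
  rw [sim_dist, edge_norm i E hE]
  have h3 : (0:ℝ) ≤ (1/3:ℝ)^i := by positivity
  calc Real.sqrt 3/2 * (1/3:ℝ)^(i+1) = (1/3:ℝ)^i * (Real.sqrt 3/6) := by ring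
    _ ≤ (1/3:ℝ)^i * dist X Y := mul_le_mul_of_nonneg_left h h3

lemma lemG : ∀ i e f (x y : E2), e + 2 ≤ f → f + 1 ≤ 4 ^ i →
    onArc i e x → onArc i f y →
    Real.sqrt 3/2 * (1/3:ℝ)^i ≤ dist x y := by
  intro i
  induction i with
  | zero =>
    intro e f x y h1 h2 _ _
    norm_num at h2
    omega
  | succ i IH =>
    intro e f x y hef hf hx hy
    have h4 : (4:ℕ)^(i+1) = 4*4^i := by rw [pow_succ]; ring
    set E := e / 4 with hE
    set F := f / 4 with hF
    have hFb : F + 1 ≤ 4 ^ i := by omega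
    rcases Nat.lt_or_ge (E+1) F with hrec | hnear
    · -- distant parents: recurse
      have hxE : onArc i E x := by
        apply onArc_parent i E (e % 4) (by omega)
        rw [show E*4 + e%4 = e by omega]
        exact hx
      have hyF : onArc i F y := by
        apply onArc_parent i F (f % 4) (by omega)
        rw [show F*4 + f%4 = f by omega]
        exact hy
      have hd := IH E F x y (by omega) hFb hxE hyF
      have hm : (1/3:ℝ)^(i+1) ≤ (1/3:ℝ)^i := by
        rw [pow_succ]
        nlinarith [pow_nonneg (by norm_num : (0:ℝ) ≤ 1/3) i]
      linarith [hd, mul_nonneg s3nn (sub_nonneg.2 hm)]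
    · rcases Nat.lt_or_ge F (E+1) with hFE | hFE'
      · -- same parent
        obtain ⟨z, hz, hxz⟩ := hx
        obtain ⟨w, hw, hyz⟩ := hy
        have hcase : (e%4 = 0 ∧ f%4 = 2) ∨ (e%4 = 0 ∧ f%4 = 3) ∨ (e%4 = 1 ∧ f%4 = 3) := by
          omega
        have hE4 : E + 1 ≤ 4 ^ i := by omega
        rcases hcase with ⟨h1,h2⟩ | ⟨h1,h2⟩ | ⟨h1,h2⟩
        · rw [show e = E*4+0 by omega, child_frame i E 0 1 rfl (by norm_num)] at hxz
          rw [show f = E*4+2 by omega, child_frame i E 2 3 rfl (by norm_num)] at hyz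
          rw [hxz, hyz]
          exact frame_bound i E hE4 _ _ (cfgA_0_2 z w hz hw)
        · rw [show e = E*4+0 by omega, child_frame i E 0 1 rfl (by norm_num)] at hxz
          rw [show f = E*4+3 by omega, child_frame i E 3 4 rfl (by norm_num)] at hyz
          rw [hxz, hyz]
          exact frame_bound i E hE4 _ _ (cfgA_0_3 z w hz hw)
        · rw [show e = E*4+1 by omega, child_frame i E 1 2 rfl (by norm_num)] at hxz
          rw [show f = E*4+3 by omega, child_frame i E 3 4 rfl (by norm_num)] at hyz
          rw [hxz, hyz]
          exact frame_bound i E hE4 _ _ (cfgA_1_3 z w hz hw)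
      · -- adjacent parents: F = E+1
        have hFE2 : F = E + 1 := by omega
        have hE4 : E + 1 ≤ 4 ^ i := by omega
        have hturn := koch_turn i F (by omega) (by omega)
        rw [hFE2, show E+1-1 = E by omega] at hturn
        have he03 : e%4 = 0 ∨ e%4 = 1 ∨ e%4 = 2 ∨ e%4 = 3 := by omega
        rcases he03 with he | he | he | he
        · obtain ⟨z, hz, hxz⟩ := hx
          rw [show e = E*4+0 by omega, child_frame i E 0 1 rfl (by norm_num)] at hxz
          have hyF : onArc i F y := by
            apply onArc_parent i F (f % 4) (by omega)
            rw [show F*4 + f%4 = f by omega]; exact hy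
          obtain ⟨w', hw', hyz'⟩ := hyF
          rw [hFE2] at hyz'
          rcases hturn with ht | ht
          · rw [hxz, absorb_F i E w60 y w' ht hyz']
            exact frame_bound i E hE4 _ _ (cfgBL_0_w60 z w' hz hw')
          · rw [hxz, absorb_F i E wm120 y w' ht hyz']
            exact frame_bound i E hE4 _ _ (cfgBL_0_wm120 z w' hz hw')
        · obtain ⟨z, hz, hxz⟩ := hx
          rw [show e = E*4+1 by omega, child_frame i E 1 2 rfl (by norm_num)] at hxz
          have hyF : onArc i F y := by
            apply onArc_parent i F (f % 4) (by omega)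
            rw [show F*4 + f%4 = f by omega]; exact hy
          obtain ⟨w', hw', hyz'⟩ := hyF
          rw [hFE2] at hyz'
          rcases hturn with ht | ht
          · rw [hxz, absorb_F i E w60 y w' ht hyz']
            exact frame_bound i E hE4 _ _ (cfgBL_1_w60 z w' hz hw')
          · rw [hxz, absorb_F i E wm120 y w' ht hyz']
            exact frame_bound i E hE4 _ _ (cfgBL_1_wm120 z w' hz hw')
        · obtain ⟨z, hz, hxz⟩ := hx
          rw [show e = E*4+2 by omega, child_frame i E 2 3 rfl (by norm_num)] at hxz
          have hyF : onArc i F y := by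
            apply onArc_parent i F (f % 4) (by omega)
            rw [show F*4 + f%4 = f by omega]; exact hy
          obtain ⟨w', hw', hyz'⟩ := hyF
          rw [hFE2] at hyz'
          rcases hturn with ht | ht
          · rw [hxz, absorb_F i E w60 y w' ht hyz']
            exact frame_bound i E hE4 _ _ (cfgBL_2_w60 z w' hz hw')
          · rw [hxz, absorb_F i E wm120 y w' ht hyz']
            exact frame_bound i E hE4 _ _ (cfgBL_2_wm120 z w' hz hw')
        · -- e%4 = 3 : absorb x into parent E, y is child of F
          have hxE : onArc i E x := by
            apply onArc_parent i E 3 (by norm_num)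
            rw [show E*4 + 3 = e by omega]; exact hx
          obtain ⟨z', hz', hxz'⟩ := hxE
          obtain ⟨w, hw, hyz⟩ := hy
          have hrf : f%4 = 1 ∨ f%4 = 2 ∨ f%4 = 3 := by omega
          rcases hrf with hf1 | hf1 | hf1
          · rw [show f = F*4+1 by omega, child_frame i F 1 2 rfl (by norm_num), hFE2] at hyz
            rcases hturn with ht | ht
            · rw [hxz', absorb_F i E w60 y _ ht hyz]
              exact frame_bound i E hE4 _ _ (cfgBR_w60_1 z' w hz' hw)
            · rw [hxz', absorb_F i E wm120 y _ ht hyz]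
              exact frame_bound i E hE4 _ _ (cfgBR_wm120_1 z' w hz' hw)
          · rw [show f = F*4+2 by omega, child_frame i F 2 3 rfl (by norm_num), hFE2] at hyz
            rcases hturn with ht | ht
            · rw [hxz', absorb_F i E w60 y _ ht hyz]
              exact frame_bound i E hE4 _ _ (cfgBR_w60_2 z' w hz' hw)
            · rw [hxz', absorb_F i E wm120 y _ ht hyz]
              exact frame_bound i E hE4 _ _ (cfgBR_wm120_2 z' w hz' hw)
          · rw [show f = F*4+3 by omega, child_frame i F 3 4 rfl (by norm_num), hFE2] at hyz
            rcases hturn with ht | ht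
            · rw [hxz', absorb_F i E w60 y _ ht hyz]
              exact frame_bound i E hE4 _ _ (cfgBR_w60_3 z' w hz' hw)
            · rw [hxz', absorb_F i E wm120 y _ ht hyz]
              exact frame_bound i E hE4 _ _ (cfgBR_wm120_3 z' w hz' hw)

end KochAux

namespace KochAux

lemma lemV (i v : ℕ) (y : E2) (hv : v + 2 ≤ 4 ^ i) (hy : onArc i (v+1) y) :
    Real.sqrt 3/2 * (1/3:ℝ)^i ≤ dist (koch i v) y := by
  cases i with
  | zero => simp only [pow_zero] at hv; omega
  | succ i =>
    have h4 : (4:ℕ)^(i+1) = 4*4^i := by rw [pow_succ]; ring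
    set E := v / 4 with hE
    have hEb : E + 1 ≤ 4 ^ i := by omega
    have hxv : koch (i+1) v
        = sim (koch i E) (koch i (E+1) - koch i E) (koch 1 (v % 4)) := by
      have h := koch_sim 1 i E (v % 4) (by omega)
      rw [show E*4^1 + v%4 = v by omega] at h
      exact h
    have hc : v%4 = 0 ∨ v%4 = 1 ∨ v%4 = 2 ∨ v%4 = 3 := by omega
    rcases hc with hr | hr | hr | hr
    · rw [hr] at hxv
      obtain ⟨w, hw, hyz⟩ := hy
      rw [show v+1 = E*4+1 by omega, child_frame i E 1 2 rfl (by norm_num)] at hyz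
      rw [hxv, hyz]
      exact frame_bound i E hEb _ _ (cfgV_0 w hw)
    · rw [hr] at hxv
      obtain ⟨w, hw, hyz⟩ := hy
      rw [show v+1 = E*4+2 by omega, child_frame i E 2 3 rfl (by norm_num)] at hyz
      rw [hxv, hyz]
      exact frame_bound i E hEb _ _ (cfgV_1 w hw)
    · rw [hr] at hxv
      obtain ⟨w, hw, hyz⟩ := hy
      rw [show v+1 = E*4+3 by omega, child_frame i E 3 4 rfl (by norm_num)] at hyz
      rw [hxv, hyz]
      exact frame_bound i E hEb _ _ (cfgV_2 w hw)
    · rw [hr] at hxv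
      have hyF : onArc i (E+1) y := by
        apply onArc_parent i (E+1) 0 (by norm_num)
        rw [show (E+1)*4 + 0 = v+1 by omega]; exact hy
      obtain ⟨w', hw', hyz'⟩ := hyF
      have hturn := koch_turn i (E+1) (by omega) (by omega)
      rw [show E+1-1 = E by omega] at hturn
      rcases hturn with ht | ht
      · rw [hxv, absorb_F i E w60 y w' ht hyz']
        exact frame_bound i E hEb _ _ (cfgV3_w60 w' hw')
      · rw [hxv, absorb_F i E wm120 y w' ht hyz']
        exact frame_bound i E hEb _ _ (cfgV3_wm120 w' hw')

lemma lemVp (i e : ℕ) (x : E2) (he : e + 2 ≤ 4 ^ i) (hx : onArc i e x) :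
    Real.sqrt 3/2 * (1/3:ℝ)^i ≤ dist x (koch i (e+2)) := by
  cases i with
  | zero => simp only [pow_zero] at he; omega
  | succ i =>
    have h4 : (4:ℕ)^(i+1) = 4*4^i := by rw [pow_succ]; ring
    set E := e / 4 with hE
    have hEb : E + 1 ≤ 4 ^ i := by omega
    obtain ⟨z, hz, hxz⟩ := hx
    have hc : e%4 = 0 ∨ e%4 = 1 ∨ e%4 = 2 ∨ e%4 = 3 := by omega
    rcases hc with hr | hr | hr | hr
    · have hyv : koch (i+1) (e+2)
          = sim (koch i E) (koch i (E+1) - koch i E) (koch 1 2) := by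
        have h := koch_sim 1 i E 2 (by omega)
        rw [show E*4^1 + 2 = e+2 by omega] at h
        exact h
      rw [show e = E*4+0 by omega, child_frame i E 0 1 rfl (by norm_num)] at hxz
      rw [hxz, hyv]
      exact frame_bound i E hEb _ _ (cfgVp_0 z hz)
    · have hyv : koch (i+1) (e+2)
          = sim (koch i E) (koch i (E+1) - koch i E) (koch 1 3) := by
        have h := koch_sim 1 i E 3 (by omega)
        rw [show E*4^1 + 3 = e+2 by omega] at h
        exact h
      rw [show e = E*4+1 by omega, child_frame i E 1 2 rfl (by norm_num)] at hxz
      rw [hxz, hyv]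
      exact frame_bound i E hEb _ _ (cfgVp_1 z hz)
    · have hyv : koch (i+1) (e+2)
          = sim (koch i E) (koch i (E+1) - koch i E) (koch 1 4) := by
        have h := koch_sim 1 i E 4 (by omega)
        rw [show E*4^1 + 4 = e+2 by omega] at h
        exact h
      rw [show e = E*4+2 by omega, child_frame i E 2 3 rfl (by norm_num)] at hxz
      rw [hxz, hyv]
      exact frame_bound i E hEb _ _ (cfgVp_2 z hz)
    · have hyv : koch (i+1) (e+2)
          = sim (koch i (E+1)) (koch i (E+1+1) - koch i (E+1)) (koch 1 1) := by
        have h := koch_sim 1 i (E+1) 1 (by omega)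
        rw [show (E+1)*4^1 + 1 = e+2 by omega] at h
        exact h
      rw [show e = E*4+3 by omega, child_frame i E 3 4 rfl (by norm_num)] at hxz
      have hturn := koch_turn i (E+1) (by omega) (by omega)
      rw [show E+1-1 = E by omega] at hturn
      rcases hturn with ht | ht
      · rw [hxz, absorb_F i E w60 _ _ ht hyv]
        exact frame_bound i E hEb _ _ (cfgVp3_w60 z hz)
      · rw [hxz, absorb_F i E wm120 _ _ ht hyv]
        exact frame_bound i E hEb _ _ (cfgVp3_wm120 z hz)

lemma lemHV (i p q : ℕ) (y : E2) (hpq : p + 1 ≤ q) (hq : q + 1 ≤ 4 ^ i)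
    (hy : onArc i q y) : Real.sqrt 3/2 * (1/3:ℝ)^i ≤ dist (koch i p) y := by
  rcases eq_or_lt_of_le hpq with h | h
  · subst h
    exact lemV i p y (by omega) hy
  · exact lemG i p q _ y (by omega) hq (onArc_start i p) hy

lemma lemGV (i e q : ℕ) (x : E2) (heq : e + 2 ≤ q) (hq : q ≤ 4 ^ i)
    (hx : onArc i e x) : Real.sqrt 3/2 * (1/3:ℝ)^i ≤ dist x (koch i q) := by
  rcases eq_or_lt_of_le heq with h | h
  · subst h
    exact lemVp i e x (by omega) hx
  · have hy : onArc i (q-1) (koch i q) := by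
      have h2 := onArc_end i (q-1)
      rw [show q - 1 + 1 = q by omega] at h2
      exact h2
    exact lemG i e (q-1) x _ (by omega) (by omega) hx hy

lemma lemVV (i p q : ℕ) (hpq : p + 1 ≤ q) (hq : q ≤ 4 ^ i) :
    Real.sqrt 3/2 * (1/3:ℝ)^i ≤ dist (koch i p) (koch i q) := by
  rcases eq_or_lt_of_le hpq with h | h
  · subst h
    rw [koch_edge_dist i p (by omega)]
    have hp := pow_nonneg (by norm_num : (0:ℝ) ≤ 1/3) i
    nlinarith [s3_lt, hp, mul_nonneg (by linarith [s3_lt] : (0:ℝ) ≤ 2 - Real.sqrt 3) hp]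
  · have hy : onArc i (q-1) (koch i q) := by
      have h2 := onArc_end i (q-1)
      rw [show q - 1 + 1 = q by omega] at h2
      exact h2
    exact lemHV i p (q-1) _ (by omega) (by omega) hy

lemma mult_ge {M c x : ℕ} (hd : M ∣ c) (hx : x * M < c) : (x + 1) * M ≤ c := by
  obtain ⟨e, rfl⟩ := hd
  rw [mul_comm] at hx
  have hxe : x < e := Nat.lt_of_mul_lt_mul_left hx
  rw [mul_comm]
  exact Nat.mul_le_mul_left M hxe

lemma le_div {M x c : ℕ} (hM : 0 < M) (h : c * M ≤ x) : c ≤ x / M :=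
  (Nat.le_div_iff_mul_le hM).mpr h

lemma lt_of_mul_right {c x y : ℕ} (h : x * c < y * c) : x < y := by
  rw [mul_comm x, mul_comm y] at h
  exact Nat.lt_of_mul_lt_mul_left h

end KochAux


open KochAux in
/-- If the pair of indices `(a, b)` has level `i` in `K_n`, then the distance between the
corresponding vertices is at least `(√3 / 2) · 3^(−i)`. -/
theorem koch_distance_lower_bound (n a b i : ℕ) (hab : a < b) (hb : b ≤ 4 ^ n)
    (hi : kochPairLevel n a b = i) :
    Real.sqrt 3 / 2 * (3 : ℝ) ^ (-(i : ℤ)) ≤ dist (koch n a) (koch n b) := by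
  have hpow : (3:ℝ)^(-(i:ℤ)) = (1/3:ℝ)^i := by
    rw [zpow_neg, zpow_natCast, one_div, inv_pow]
  rw [hpow]
  have hlev_le : ∀ k, kochLevel n k ≤ n := by
    intro k
    exact Nat.sInf_le ⟨le_refl n, by simp⟩
  have hnmem : n ∈ {j | ∃ k₁ k₂ : ℕ, a ≤ k₁ ∧ k₁ < k₂ ∧ k₂ ≤ b ∧
      kochLevel n k₁ ≤ j ∧ kochLevel n k₂ ≤ j} :=
    ⟨a, b, le_refl a, hab, le_refl b, hlev_le a, hlev_le b⟩
  have hin : i ≤ n := by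
    rw [← hi]
    exact Nat.sInf_le hnmem
  have himem : i ∈ {j | ∃ k₁ k₂ : ℕ, a ≤ k₁ ∧ k₁ < k₂ ∧ k₂ ≤ b ∧
      kochLevel n k₁ ≤ j ∧ kochLevel n k₂ ≤ j} := by
    rw [← hi]
    exact Nat.sInf_mem ⟨n, hnmem⟩
  obtain ⟨k₁, k₂, hak, hkk, hkb, hl1, hl2⟩ := himem
  have hdvd : ∀ k, kochLevel n k ≤ i → 4 ^ (n - i) ∣ k := by
    intro k hk
    have hmem : kochLevel n k ∈ {j | j ≤ n ∧ 4 ^ (n - j) ∣ k} :=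
      Nat.sInf_mem (⟨n, le_refl n, by simp⟩ :
        {j | j ≤ n ∧ 4 ^ (n - j) ∣ k}.Nonempty)
    obtain ⟨h1, h2⟩ := hmem
    exact dvd_trans (pow_dvd_pow 4 (by omega)) h2
  have hd1 := hdvd k₁ hl1
  have hd2 := hdvd k₂ hl2
  clear hdvd hnmem hlev_le hi hpow
  obtain ⟨m, rfl⟩ : ∃ m, n = i + m := ⟨n - i, by omega⟩
  rw [show i + m - i = m by omega] at hd1 hd2
  have hMpos : 0 < 4 ^ m := by positivity
  have h4n : (4:ℕ) ^ (i + m) = 4 ^ i * 4 ^ m := pow_add 4 i m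
  have hamod := Nat.div_add_mod a (4 ^ m)
  have hbmod := Nat.div_add_mod b (4 ^ m)
  have hma : a % 4 ^ m < 4 ^ m := Nat.mod_lt _ hMpos
  have hmb : b % 4 ^ m < 4 ^ m := Nat.mod_lt _ hMpos
  have hcomm_a : a / 4 ^ m * 4 ^ m = 4 ^ m * (a / 4 ^ m) := mul_comm _ _
  have hcomm_b : b / 4 ^ m * 4 ^ m = 4 ^ m * (b / 4 ^ m) := mul_comm _ _
  have hadd_a : (a / 4 ^ m + 1) * 4 ^ m = a / 4 ^ m * 4 ^ m + 4 ^ m := by ring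
  have hadd_a2 : (a / 4 ^ m + 2) * 4 ^ m = a / 4 ^ m * 4 ^ m + 4 ^ m + 4 ^ m := by ring
  have hk2 : k₁ + 4 ^ m ≤ k₂ := by
    obtain ⟨c₁, rfl⟩ := hd1
    obtain ⟨c₂, rfl⟩ := hd2
    have hcc : c₁ < c₂ := Nat.lt_of_mul_lt_mul_left hkk
    calc 4 ^ m * c₁ + 4 ^ m = 4 ^ m * (c₁ + 1) := by ring
      _ ≤ 4 ^ m * c₂ := Nat.mul_le_mul_left _ (by omega)
  have hq_le : b / 4 ^ m ≤ 4 ^ i := by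
    have hlt : b < (4 ^ i + 1) * 4 ^ m := by
      have h5 : (4 ^ i + 1) * 4 ^ m = 4 ^ i * 4 ^ m + 4 ^ m := by ring
      omega
    have := (Nat.div_lt_iff_lt_mul hMpos).mpr hlt
    omega
  have hq_lt : ¬ 4 ^ m ∣ b → b / 4 ^ m + 1 ≤ 4 ^ i := by
    intro hbdvd
    have e2 : b % 4 ^ m ≠ 0 := fun h0 => hbdvd (Nat.dvd_of_mod_eq_zero h0)
    have h5 : b / 4 ^ m * 4 ^ m < 4 ^ i * 4 ^ m := by omega
    have := lt_of_mul_right h5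
    omega
  have hyq_arc : ¬ 4 ^ m ∣ b → onArc i (b / 4 ^ m) (koch (i+m) b) := by
    intro _
    have h := onArc_koch i m (b / 4 ^ m) (b % 4 ^ m) (le_of_lt hmb)
    rw [show b / 4 ^ m * 4 ^ m + b % 4 ^ m = b by omega] at h
    exact h
  by_cases hadvd : 4 ^ m ∣ a
  · have hxa : koch (i+m) a = koch i (a / 4 ^ m) := by
      conv_lhs => rw [← Nat.div_mul_cancel hadvd]
      exact koch_mult i m (a / 4 ^ m)
    have haq : a = a / 4 ^ m * 4 ^ m := (Nat.div_mul_cancel hadvd).symm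
    have hkp1 : (a / 4 ^ m + 1) * 4 ^ m ≤ b := by omega
    have hq1 : a / 4 ^ m + 1 ≤ b / 4 ^ m := le_div hMpos hkp1
    by_cases hbdvd : 4 ^ m ∣ b
    · have hyb : koch (i+m) b = koch i (b / 4 ^ m) := by
        conv_lhs => rw [← Nat.div_mul_cancel hbdvd]
        exact koch_mult i m (b / 4 ^ m)
      rw [hxa, hyb]
      exact lemVV i (a / 4 ^ m) (b / 4 ^ m) hq1 hq_le
    · rw [hxa]
      exact lemHV i (a / 4 ^ m) (b / 4 ^ m) _ hq1 (hq_lt hbdvd) (hyq_arc hbdvd)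
  · have hxp : onArc i (a / 4 ^ m) (koch (i+m) a) := by
      have h := onArc_koch i m (a / 4 ^ m) (a % 4 ^ m) (le_of_lt hma)
      rw [show a / 4 ^ m * 4 ^ m + a % 4 ^ m = a by omega] at h
      exact h
    have e2 : a % 4 ^ m ≠ 0 := fun h0 => hadvd (Nat.dvd_of_mod_eq_zero h0)
    have hk1p : (a / 4 ^ m + 1) * 4 ^ m ≤ k₁ := mult_ge hd1 (by omega)
    have hkp2 : (a / 4 ^ m + 2) * 4 ^ m ≤ b := by omega
    have hq2 : a / 4 ^ m + 2 ≤ b / 4 ^ m := le_div hMpos hkp2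
    by_cases hbdvd : 4 ^ m ∣ b
    · have hyb : koch (i+m) b = koch i (b / 4 ^ m) := by
        conv_lhs => rw [← Nat.div_mul_cancel hbdvd]
        exact koch_mult i m (b / 4 ^ m)
      rw [hyb]
      exact lemGV i (a / 4 ^ m) (b / 4 ^ m) _ hq2 hq_le hxp
    · exact lemG i (a / 4 ^ m) (b / 4 ^ m) _ _ hq2 (hq_lt hbdvd) hxp (hyq_arc hbdvd)
end

section
/- Let u, a, b, v ∈ EuclideanSpace ℝ (Fin 2), let r > 0 and s > 0 with s · r ≤ dist u v, and let c₁, c₂ ∈ EuclideanSpace ℝ (Fin 2). Suppose p₁ : Fin (m₁+1) → EuclideanSpace ℝ (Fin 2) is a polygonal path from u to a whose trace is contained in the closed ball of radius r around c₁, and p₂ : Fin (m₂+1) → EuclideanSpace ℝ (Fin 2) is a polygonal path from b to v whose trace is contained in the closed ball of radius r around c₂. Then the concatenated polygonal path with vertex sequence p₁ 0, …, p₁ m₁, p₂ 0, …, p₂ m₂ (i.e., traversing p₁ from u to a, then the edge from a to b, then p₂ from b to v) admits a Fréchet matching to the segment from u to v within 2r, and hence within (2/s) · dist u v. -/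
/-- The uniform piecewise-linear parametrization of the polygonal path `p`:
on `[k/m, (k+1)/m]` it interpolates linearly from `p k` to `p (k+1)`. -/
noncomputable def polyParam {E : Type*} [NormedAddCommGroup E] [NormedSpace ℝ E]
    {m : ℕ} (p : Fin (m + 1) → E) (τ : ℝ) : E :=
  let k : ℕ := min ⌊τ * m⌋₊ (m - 1)
  p ⟨min k m, Nat.lt_succ_of_le (min_le_right _ _)⟩ +
    (τ * m - (k : ℝ)) •
      (p ⟨min (k + 1) m, Nat.lt_succ_of_le (min_le_right _ _)⟩ -
        p ⟨min k m, Nat.lt_succ_of_le (min_le_right _ _)⟩)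

/-- The polygonal path `p` admits a Fréchet matching to the segment from `u` to `v`
within `ε`: there are continuous monotone reparametrizations `φ, ψ` of `[0,1]`, fixing the
endpoints, such that at every time `τ` the point `γ_p (φ τ)` of the path and the point
`u + ψ τ • (v − u)` of the segment are at distance at most `ε`. -/
def FrechetMatchingWithin {E : Type*} [NormedAddCommGroup E] [NormedSpace ℝ E]
    {m : ℕ} (p : Fin (m + 1) → E) (u v : E) (ε : ℝ) : Prop :=
  ∃ φ ψ : ℝ → ℝ,
    ContinuousOn φ (Set.Icc 0 1) ∧ ContinuousOn ψ (Set.Icc 0 1) ∧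
    MonotoneOn φ (Set.Icc 0 1) ∧ MonotoneOn ψ (Set.Icc 0 1) ∧
    Set.MapsTo φ (Set.Icc 0 1) (Set.Icc 0 1) ∧ Set.MapsTo ψ (Set.Icc 0 1) (Set.Icc 0 1) ∧
    φ 0 = 0 ∧ ψ 0 = 0 ∧ φ 1 = 1 ∧ ψ 1 = 1 ∧
    ∀ τ ∈ Set.Icc (0 : ℝ) 1, dist (polyParam p (φ τ)) (u + ψ τ • (v - u)) ≤ ε

lemma polyParam_eq {E : Type*} [NormedAddCommGroup E] [NormedSpace ℝ E]
    {m : ℕ} (p : Fin (m + 1) → E) (τ : ℝ) (k : ℕ)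
    (hk : min ⌊τ * m⌋₊ (m - 1) = k) (hkm : k < m) :
    polyParam p τ = p ⟨k, by omega⟩ +
      (τ * m - k) • (p ⟨k + 1, by omega⟩ - p ⟨k, by omega⟩) := by
  simp only [polyParam, hk]
  have h3 : min k m = k := by omega
  have h4 : min (k+1) m = k+1 := by omega
  simp only [h3, h4]

lemma frechetMatchingWithin_mono {E : Type*} [NormedAddCommGroup E] [NormedSpace ℝ E]
    {m : ℕ} {p : Fin (m + 1) → E} {u v : E} {ε ε' : ℝ}
    (h : FrechetMatchingWithin p u v ε) (hε : ε ≤ ε') : FrechetMatchingWithin p u v ε' := by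
  obtain ⟨φ, ψ, h1, h2, h3, h4, h5, h6, h7, h8, h9, h10, h11⟩ := h
  exact ⟨φ, ψ, h1, h2, h3, h4, h5, h6, h7, h8, h9, h10,
    fun τ hτ => (h11 τ hτ).trans hε⟩

/-- Key step for WSPD-based spanners: if `p₁` is a polygonal path from `u` to `a` contained
in the closed ball of radius `r` around `c₁`, and `p₂` is a polygonal path from `b` to `v`
contained in the closed ball of radius `r` around `c₂`, and `s · r ≤ dist u v`, then the
concatenated path `u, …, a, b, …, v` admits a Fréchet matching to the segment from `u` to
`v` within `2r`, and hence within `(2/s) · dist u v`. -/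
theorem wspd_concatenated_path_frechet
    (u a b v : EuclideanSpace ℝ (Fin 2)) (r s : ℝ) (hr : 0 < r) (hs : 0 < s)
    (hsr : s * r ≤ dist u v) (c₁ c₂ : EuclideanSpace ℝ (Fin 2)) (m₁ m₂ : ℕ)
    (p₁ : Fin (m₁ + 1) → EuclideanSpace ℝ (Fin 2))
    (p₂ : Fin (m₂ + 1) → EuclideanSpace ℝ (Fin 2))
    (hp₁u : p₁ 0 = u) (hp₁a : p₁ (Fin.last m₁) = a)
    (hp₂b : p₂ 0 = b) (hp₂v : p₂ (Fin.last m₂) = v)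
    (htr₁ : (⋃ k : Fin m₁, segment ℝ (p₁ k.castSucc) (p₁ k.succ)) ∪ Set.range p₁ ⊆
      Metric.closedBall c₁ r)
    (htr₂ : (⋃ k : Fin m₂, segment ℝ (p₂ k.castSucc) (p₂ k.succ)) ∪ Set.range p₂ ⊆
      Metric.closedBall c₂ r) :
    FrechetMatchingWithin (m := m₁ + m₂ + 1)
      (fun j => if h : (j : ℕ) ≤ m₁ then p₁ ⟨j, Nat.lt_succ_of_le h⟩
        else p₂ ⟨(j : ℕ) - (m₁ + 1), by have := j.isLt; omega⟩) u v (2 * r) ∧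
    FrechetMatchingWithin (m := m₁ + m₂ + 1)
      (fun j => if h : (j : ℕ) ≤ m₁ then p₁ ⟨j, Nat.lt_succ_of_le h⟩
        else p₂ ⟨(j : ℕ) - (m₁ + 1), by have := j.isLt; omega⟩) u v (2 / s * dist u v) := by
  have hu1 : u ∈ Metric.closedBall c₁ r := htr₁ (Or.inr ⟨0, hp₁u⟩)
  have ha1 : a ∈ Metric.closedBall c₁ r := htr₁ (Or.inr ⟨Fin.last m₁, hp₁a⟩)
  have hb2 : b ∈ Metric.closedBall c₂ r := htr₂ (Or.inr ⟨0, hp₂b⟩)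
  have hv2 : v ∈ Metric.closedBall c₂ r := htr₂ (Or.inr ⟨Fin.last m₂, hp₂v⟩)
  set N := m₁ + m₂ + 1 with hN
  set p : Fin (N + 1) → EuclideanSpace ℝ (Fin 2) := fun j =>
    if h : (j : ℕ) ≤ m₁ then p₁ ⟨j, Nat.lt_succ_of_le h⟩
    else p₂ ⟨(j : ℕ) - (m₁ + 1), by have := j.isLt; omega⟩ with hp
  have pval₁ : ∀ (j : ℕ) (hj : j < N + 1) (hj' : j ≤ m₁),
      p ⟨j, hj⟩ = p₁ ⟨j, by omega⟩ := by
    intro j hj hj'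
    simp only [hp]
    exact dif_pos hj'
  have pval₂ : ∀ (j : ℕ) (hj : j < N + 1) (hj' : m₁ < j),
      p ⟨j, hj⟩ = p₂ ⟨j - (m₁ + 1), by omega⟩ := by
    intro j hj hj'
    simp only [hp]
    exact dif_neg (not_le.mpr hj')
  have hNR : (0:ℝ) ≤ (N:ℝ) := Nat.cast_nonneg _
  have key : FrechetMatchingWithin p u v (2 * r) := by
    refine ⟨fun τ => τ, fun τ => max 0 (min 1 (τ * (N:ℝ) - m₁)), continuousOn_id,
      (by fun_prop), fun x _ y _ h => h, ?_, fun x hx => hx, ?_, rfl, ?_, rfl, ?_, ?_⟩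
    · intro x _ y _ hxy
      have hmul : x * (N:ℝ) ≤ y * N := mul_le_mul_of_nonneg_right hxy hNR
      beta_reduce
      gcongr
    · intro x hx
      exact ⟨le_max_left _ _, max_le zero_le_one (min_le_left _ _)⟩
    · have : (0:ℝ) * N - m₁ ≤ 0 := by
        have : (0:ℝ) ≤ (m₁:ℝ) := Nat.cast_nonneg _
        nlinarith
      simp only [max_eq_left ((min_le_right _ _).trans this)]
    · have h1 : (1:ℝ) ≤ 1 * (N:ℝ) - m₁ := by
        rw [hN]; push_cast; linarith
      show (0:ℝ) ⊔ (1:ℝ) ⊓ (1 * (N:ℝ) - (m₁:ℝ)) = 1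
      rw [min_eq_left h1, max_eq_right zero_le_one]
    · intro τ hτ
      obtain ⟨h0, h1⟩ := hτ
      beta_reduce
      set K := min ⌊τ * (N:ℝ)⌋₊ (N - 1) with hKdef
      have hKN : K < N := by omega
      have hKle : (K:ℝ) ≤ τ * N := by
        have hf := Nat.floor_le (a := τ * (N:ℝ)) (by positivity)
        have h2 : (K:ℝ) ≤ (⌊τ * (N:ℝ)⌋₊ : ℝ) := Nat.cast_le.mpr (min_le_left _ _)
        linarith
      have hKub : τ * N ≤ (K:ℝ) + 1 := by
        rcases le_or_gt ⌊τ * (N:ℝ)⌋₊ (N - 1) with h | h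
        · have hK' : K = ⌊τ * (N:ℝ)⌋₊ := by omega
          rw [hK']
          exact (Nat.lt_floor_add_one _).le
        · have hK' : K = N - 1 := by omega
          have hτN : τ * N ≤ N := by nlinarith
          have : ((N - 1 : ℕ):ℝ) + 1 = (N:ℝ) := by
            have h1 : 1 ≤ N := by omega
            push_cast [h1]
            ring
          rw [hK', this]
          exact hτN
      rw [polyParam_eq p τ K hKdef.symm hKN]
      have ht0 : 0 ≤ τ * (N:ℝ) - K := by linarith
      have ht1 : τ * (N:ℝ) - K ≤ 1 := by linarith
      rcases lt_trichotomy K m₁ with hKm | hKm | hKm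
      · -- still on p₁, segment point stays at u
        have hψ : max 0 (min 1 (τ * (N:ℝ) - m₁)) = 0 := by
          have hc : (K:ℝ) + 1 ≤ (m₁:ℝ) := by exact_mod_cast Nat.succ_le_of_lt hKm
          exact max_eq_left ((min_le_right _ _).trans (by linarith))
        rw [hψ, zero_smul, add_zero]
        rw [pval₁ K (by omega) (by omega), pval₁ (K+1) (by omega) (by omega)]
        have hseg : p₁ ⟨K, by omega⟩ + (τ * (N:ℝ) - K) • (p₁ ⟨K+1, by omega⟩ - p₁ ⟨K, by omega⟩) ∈
            Metric.closedBall c₁ r := by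
          refine htr₁ (Or.inl (Set.mem_iUnion.mpr ⟨⟨K, hKm⟩, ?_⟩))
          rw [segment_eq_image']
          exact ⟨τ * (N:ℝ) - K, ⟨ht0, ht1⟩, rfl⟩
        calc dist (p₁ ⟨K, by omega⟩ + (τ * (N:ℝ) - K) • (p₁ ⟨K+1, by omega⟩ - p₁ ⟨K, by omega⟩)) u
            ≤ dist (p₁ ⟨K, by omega⟩ + (τ * (N:ℝ) - K) • (p₁ ⟨K+1, by omega⟩ - p₁ ⟨K, by omega⟩)) c₁
              + dist c₁ u := dist_triangle _ _ _
          _ ≤ r + r := add_le_add (Metric.mem_closedBall.mp hseg)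
              (by rw [dist_comm]; exact Metric.mem_closedBall.mp hu1)
          _ = 2 * r := by ring
      · -- the bridging edge a-b
        have hψ : max 0 (min 1 (τ * (N:ℝ) - m₁)) = τ * (N:ℝ) - K := by
          have hKR : (K:ℝ) = (m₁:ℝ) := by exact_mod_cast congrArg (Nat.cast (R := ℝ)) hKm
          rw [show τ * (N:ℝ) - (m₁:ℝ) = τ * (N:ℝ) - K by rw [hKR],
            min_eq_right ht1, max_eq_right ht0]
        rw [hψ]
        have e1 : p ⟨K, by omega⟩ = a := by
          rw [pval₁ K (by omega) (by omega), ← hp₁a]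
          exact congrArg p₁ (Fin.ext (show K = (Fin.last m₁).val by
            simp only [Fin.val_last]; omega))
        have e2 : p ⟨K + 1, by omega⟩ = b := by
          rw [pval₂ (K+1) (by omega) (by omega), ← hp₂b]
          exact congrArg p₂ (Fin.ext (show K + 1 - (m₁ + 1) = ((0 : Fin (m₂+1))).val by
            simp only [Fin.val_zero]; omega))
        rw [e1, e2, dist_eq_norm]
        have hrw : a + (τ * (N:ℝ) - K) • (b - a) - (u + (τ * (N:ℝ) - K) • (v - u)) =
            (1 - (τ * (N:ℝ) - K)) • (a - u) + (τ * (N:ℝ) - K) • (b - v) := by module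
        rw [hrw]
        have hau : ‖a - u‖ ≤ 2 * r := by
          rw [← dist_eq_norm]
          calc dist a u ≤ dist a c₁ + dist c₁ u := dist_triangle _ _ _
            _ ≤ r + r := add_le_add (Metric.mem_closedBall.mp ha1)
                (by rw [dist_comm]; exact Metric.mem_closedBall.mp hu1)
            _ = 2 * r := by ring
        have hbv : ‖b - v‖ ≤ 2 * r := by
          rw [← dist_eq_norm]
          calc dist b v ≤ dist b c₂ + dist c₂ v := dist_triangle _ _ _
            _ ≤ r + r := add_le_add (Metric.mem_closedBall.mp hb2)
                (by rw [dist_comm]; exact Metric.mem_closedBall.mp hv2)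
            _ = 2 * r := by ring
        calc ‖(1 - (τ * (N:ℝ) - K)) • (a - u) + (τ * (N:ℝ) - K) • (b - v)‖
            ≤ ‖(1 - (τ * (N:ℝ) - K)) • (a - u)‖ + ‖(τ * (N:ℝ) - K) • (b - v)‖ := norm_add_le _ _
          _ = (1 - (τ * (N:ℝ) - K)) * ‖a - u‖ + (τ * (N:ℝ) - K) * ‖b - v‖ := by
              rw [norm_smul, norm_smul, Real.norm_eq_abs, Real.norm_eq_abs,
                abs_of_nonneg (by linarith), abs_of_nonneg ht0]
          _ ≤ (1 - (τ * (N:ℝ) - K)) * (2 * r) + (τ * (N:ℝ) - K) * (2 * r) := by gcongr <;> linarith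
          _ = 2 * r := by ring
      · -- on p₂, segment point stays at v
        have hψ : max 0 (min 1 (τ * (N:ℝ) - m₁)) = 1 := by
          have hc : (m₁:ℝ) + 1 ≤ (K:ℝ) := by exact_mod_cast Nat.succ_le_of_lt hKm
          rw [min_eq_left (by linarith), max_eq_right zero_le_one]
        rw [hψ, one_smul, add_sub_cancel]
        have hj : K - (m₁ + 1) < m₂ := by omega
        have e1 : p ⟨K, by omega⟩ = p₂ ⟨K - (m₁ + 1), by omega⟩ :=
          pval₂ K (by omega) hKm
        have e2 : p ⟨K + 1, by omega⟩ = p₂ ⟨K - (m₁ + 1) + 1, by omega⟩ := by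
          rw [pval₂ (K+1) (by omega) (by omega)]
          exact congrArg p₂ (Fin.ext (show K + 1 - (m₁ + 1) = K - (m₁ + 1) + 1 by omega))
        rw [e1, e2]
        have hseg : p₂ ⟨K - (m₁+1), by omega⟩ +
            (τ * (N:ℝ) - K) • (p₂ ⟨K - (m₁+1) + 1, by omega⟩ - p₂ ⟨K - (m₁+1), by omega⟩) ∈
            Metric.closedBall c₂ r := by
          refine htr₂ (Or.inl (Set.mem_iUnion.mpr ⟨⟨K - (m₁+1), hj⟩, ?_⟩))
          rw [segment_eq_image']
          exact ⟨τ * (N:ℝ) - K, ⟨ht0, ht1⟩, rfl⟩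
        calc dist (p₂ ⟨K - (m₁+1), by omega⟩ +
              (τ * (N:ℝ) - K) • (p₂ ⟨K - (m₁+1) + 1, by omega⟩ - p₂ ⟨K - (m₁+1), by omega⟩)) v
            ≤ dist (p₂ ⟨K - (m₁+1), by omega⟩ +
              (τ * (N:ℝ) - K) • (p₂ ⟨K - (m₁+1) + 1, by omega⟩ - p₂ ⟨K - (m₁+1), by omega⟩)) c₂
              + dist c₂ v := dist_triangle _ _ _
          _ ≤ r + r := add_le_add (Metric.mem_closedBall.mp hseg)
              (by rw [dist_comm]; exact Metric.mem_closedBall.mp hv2)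
          _ = 2 * r := by ring
  have h2r : 2 * r ≤ 2 / s * dist u v := by
    rw [div_mul_eq_mul_div, le_div_iff₀ hs]
    nlinarith
  exact ⟨key, frechetMatchingWithin_mono key h2r⟩
end
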